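/- arXiv:2202.07496 — 18 statements merged into one kernel-verified Lean document; each statement's English description precedes it below -/
import Mathlib

section
/- There exist parameters θ : Fin 3 → ℝ and values q : Fin 3 → ℝ such that the cross-entropy softmax update strictly decreases the expected value. Concretely, take θ = (10, 0, 0) and q = (0.99, 1, 0), so that the second action uniquely maximizes q; let π = softmax θ and define θ'(a) = θ(a) + (𝟙[a = a₂] − π(a)) (cross-entropy update with learning rate 1 toward the q-maximizing action a₂). Then ∑_a softmax θ' (a) · q(a) < ∑_a softmax θ (a) · q(a). -/
noncomputable def softmax {A : Type*} [Fintype A] (θ : A → ℝ) (a : A) : ℝ :=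
  Real.exp (θ a) / ∑ b, Real.exp (θ b)

/-!
Since `π(a₁) ≈ 1`, the update lowers `θ(a₁)` by almost `1` relative to both `a₂` and `a₃`, so
both gain probability mass at the expense of `a₁`, in ratio about `e : 1`. Every unit of mass
moved to `a₃` costs `0.99`, every unit moved to `a₂` gains only `0.01`, and the loss wins.
-/

open Real

theorem sum_softmax_mul_eq {A : Type*} [Fintype A] (θ q : A → ℝ) (c : ℝ) :
    ∑ a, softmax θ a * q a = (∑ a, exp (θ a - c) * q a) / ∑ a, exp (θ a - c) := by
  simp only [softmax, exp_sub, div_mul_eq_mul_div, ← Finset.sum_div]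
  rw [div_div_div_cancel_right₀ (exp_pos c).ne']

theorem three_mul_exp_sub_le_two_mul_exp {x t : ℝ} (ht : 1 / 2 ≤ t) :
    3 * exp (x - t) ≤ 2 * exp x := by
  have h : 3 / 2 ≤ exp t := by linarith [add_one_le_exp t]
  rw [exp_sub, mul_div_assoc', div_le_iff₀ (exp_pos t)]
  nlinarith [exp_pos x]

/-- The expected values after and before the update, with logits shifted so that `θ a₃ = 0`;
`x` and `E` are the weights `exp (θ a₁)` after and before. -/
theorem value_lt_of_three_mul_le {E x : ℝ} (hE : 11 ≤ E) (hx : 0 < x) (hxE : 3 * x ≤ 2 * E) :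
    (x * (99 / 100) + exp 1) / (x + exp 1 + 1) < (E * (99 / 100) + 1) / (E + 1 + 1) := by
  have he := exp_one_lt_three
  rw [div_lt_div_iff₀ (by positivity) (by positivity)]
  nlinarith [mul_lt_mul_of_pos_left he (by linarith : 0 < E)]

/-- The cross-entropy softmax update may strictly decrease the expected value. -/
theorem ce_update_may_decrease_value :
    let θ : Fin 3 → ℝ := ![10, 0, 0]
    let q : Fin 3 → ℝ := ![0.99, 1, 0]
    let θ' : Fin 3 → ℝ := fun a => θ a + ((if a = 1 then (1 : ℝ) else 0) - softmax θ a)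
    (∀ a : Fin 3, a ≠ 1 → q a < q 1) ∧
    ∑ a, softmax θ' a * q a < ∑ a, softmax θ a * q a := by
  intro θ q θ'
  refine ⟨fun a ha => by fin_cases a <;> norm_num [q] at *, ?_⟩
  set E := exp 10
  have hE : 11 ≤ E := by linarith [add_one_le_exp 10]
  have hπ : ∀ a, softmax θ a = exp (θ a) / (E + 1 + 1) := fun a => by
    simp [softmax, Fin.sum_univ_three, θ, E]
  have hθ'₀ : θ' 0 - θ' 2 = 10 - (E - 1) / (E + 1 + 1) := by
    simp only [θ', hπ]; simp [θ, E]; ring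
  have hθ'₁ : θ' 1 - θ' 2 = 1 := by simp [θ', hπ, θ]
  rw [sum_softmax_mul_eq θ' q (θ' 2), sum_softmax_mul_eq θ q (θ 2)]
  simp only [Fin.sum_univ_three, hθ'₀, hθ'₁, sub_self]
  norm_num [q, θ, Matrix.cons_val_two]
  refine value_lt_of_three_mul_le hE (exp_pos _) (three_mul_exp_sub_le_two_mul_exp ?_)
  rw [le_div_iff₀ (by positivity)]
  linarith
end

section
/- The modified cross-entropy update moves the softmax policy toward the distinguished action and away from every other action: if A is a finite type with |A| ≥ 2, a* ∈ A, u ≥ 0, and θ' is the MCE update of θ : A → ℝ with step u at a*, then softmax θ' (a) ≤ softmax θ (a) for every a ≠ a*, and softmax θ' (a*) ≥ softmax θ (a*). -/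
/-- The modified cross-entropy update moves the softmax policy toward the distinguished
action and away from every other action. -/
theorem mce_monotone_policy {A : Type*} [Fintype A] [DecidableEq A]
    (hA : 2 ≤ Fintype.card A) (astar : A) (u : ℝ) (hu : 0 ≤ u)
    (θ θ' : A → ℝ)
    (hstar : θ' astar = θ astar + u)
    (hother : ∀ a, a ≠ astar → θ' a = θ a - u / ((Fintype.card A : ℝ) - 1)) :
    (∀ a, a ≠ astar → softmax θ' a ≤ softmax θ a) ∧
    softmax θ astar ≤ softmax θ' astar := by
  have hn : (2:ℝ) ≤ (Fintype.card A : ℝ) := by exact_mod_cast hA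
  set c : ℝ := u / ((Fintype.card A : ℝ) - 1) with hcdef
  have hc : 0 ≤ c := div_nonneg hu (by linarith)
  have hS : 0 < ∑ b, Real.exp (θ b) :=
    Finset.sum_pos (fun b _ => Real.exp_pos _) ⟨astar, Finset.mem_univ _⟩
  have hS' : 0 < ∑ b, Real.exp (θ' b) :=
    Finset.sum_pos (fun b _ => Real.exp_pos _) ⟨astar, Finset.mem_univ _⟩
  have hrest : 0 ≤ ∑ b ∈ Finset.univ.erase astar, Real.exp (θ b) :=
    Finset.sum_nonneg fun _ _ => (Real.exp_pos _).le
  have hsplit : ∑ b, Real.exp (θ b)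
      = Real.exp (θ astar) + ∑ b ∈ Finset.univ.erase astar, Real.exp (θ b) :=
    (Finset.add_sum_erase _ _ (Finset.mem_univ _)).symm
  have hsplit' : ∑ b, Real.exp (θ' b)
      = Real.exp (θ astar) * Real.exp u
        + (∑ b ∈ Finset.univ.erase astar, Real.exp (θ b)) * Real.exp (-c) := by
    rw [← Finset.add_sum_erase _ _ (Finset.mem_univ astar), hstar, Real.exp_add,
      Finset.sum_mul]
    congr 1
    refine Finset.sum_congr rfl fun b hb => ?_
    rw [hother b (Finset.ne_of_mem_erase hb), sub_eq_add_neg, Real.exp_add]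
  have h1 : Real.exp (-c) ≤ 1 := Real.exp_le_one_iff.mpr (neg_nonpos.mpr hc)
  have h2 : (1:ℝ) ≤ Real.exp u := Real.one_le_exp hu
  have hestar : 0 < Real.exp (θ astar) := Real.exp_pos _
  have hlow : Real.exp (-c) * ∑ b, Real.exp (θ b) ≤ ∑ b, Real.exp (θ' b) := by
    rw [hsplit, hsplit']
    nlinarith [Real.exp_pos (-c)]
  have hup : (∑ b, Real.exp (θ' b)) ≤ Real.exp u * ∑ b, Real.exp (θ b) := by
    rw [hsplit, hsplit']
    nlinarith
  constructor
  · intro a ha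
    have hθ'a : θ' a = θ a - c := hother a ha
    unfold softmax
    rw [hθ'a, sub_eq_add_neg, Real.exp_add, div_le_div_iff₀ hS' hS]
    have := Real.exp_pos (θ a)
    nlinarith
  · unfold softmax
    rw [hstar, Real.exp_add, div_le_div_iff₀ hS hS']
    nlinarith
end

section
/- The modified cross-entropy update has nonnegative one-step advantage: if A is a finite type with |A| ≥ 2, a* ∈ A, u ≥ 0, θ' is the MCE update of θ : A → ℝ with step u at a*, and q : A → ℝ satisfies q(a) ≤ q(a*) for all a ∈ A, then ∑_{a ∈ A} (softmax θ' (a) − softmax θ (a)) · q(a) ≥ 0. -/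
/-- The modified cross-entropy update has nonnegative one-step advantage. -/
theorem mce_nonneg_advantage {A : Type*} [Fintype A] [DecidableEq A]
    (hA : 2 ≤ Fintype.card A) (astar : A) (u : ℝ) (hu : 0 ≤ u)
    (θ θ' : A → ℝ)
    (hstar : θ' astar = θ astar + u)
    (hother : ∀ a, a ≠ astar → θ' a = θ a - u / ((Fintype.card A : ℝ) - 1))
    (q : A → ℝ) (hq : ∀ a, q a ≤ q astar) :
    0 ≤ ∑ a, (softmax θ' a - softmax θ a) * q a := by
  have hcard : (1:ℝ) ≤ (Fintype.card A : ℝ) - 1 := by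
    have : (2:ℝ) ≤ Fintype.card A := by exact_mod_cast hA
    linarith
  set c := u / ((Fintype.card A : ℝ) - 1) with hc
  have hc0 : 0 ≤ c := div_nonneg hu (by linarith)
  have hne : Nonempty A := Fintype.card_pos_iff.mp (by omega)
  have hS : 0 < ∑ b, Real.exp (θ b) :=
    Finset.sum_pos (fun b _ => Real.exp_pos _) Finset.univ_nonempty
  have hS' : 0 < ∑ b, Real.exp (θ' b) :=
    Finset.sum_pos (fun b _ => Real.exp_pos _) Finset.univ_nonempty
  have hlow : Real.exp (-c) * (∑ b, Real.exp (θ b)) ≤ ∑ b, Real.exp (θ' b) := by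
    rw [Finset.mul_sum]
    apply Finset.sum_le_sum
    intro b _
    rw [← Real.exp_add]
    by_cases hb : b = astar
    · subst hb; rw [hstar]; exact Real.exp_le_exp.mpr (by linarith)
    · rw [hother b hb]; exact Real.exp_le_exp.mpr (by linarith)
  have hmono : ∀ a, a ≠ astar → softmax θ' a ≤ softmax θ a := by
    intro a ha
    unfold softmax
    rw [hother a ha, sub_eq_add_neg, add_comm, Real.exp_add]
    calc Real.exp (-c) * Real.exp (θ a) / ∑ b, Real.exp (θ' b)
        ≤ Real.exp (-c) * Real.exp (θ a) / (Real.exp (-c) * ∑ b, Real.exp (θ b)) := by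
          apply div_le_div_of_nonneg_left _ _ hlow
          · positivity
          · positivity
      _ = Real.exp (θ a) / ∑ b, Real.exp (θ b) := by
          rw [mul_div_mul_left _ _ (Real.exp_ne_zero _)]
  have hsum : ∑ a, softmax θ a = 1 := by
    unfold softmax; rw [← Finset.sum_div, div_self hS.ne']
  have hsum' : ∑ a, softmax θ' a = 1 := by
    unfold softmax; rw [← Finset.sum_div, div_self hS'.ne']
  have hd : ∑ a, (softmax θ' a - softmax θ a) = 0 := by
    rw [Finset.sum_sub_distrib, hsum, hsum']; ring
  have key : ∑ a, (softmax θ' a - softmax θ a) * q a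
      = ∑ a, (softmax θ' a - softmax θ a) * (q a - q astar) := by
    simp only [mul_sub]
    rw [Finset.sum_sub_distrib, ← Finset.sum_mul, hd, zero_mul, sub_zero]
  rw [key]
  apply Finset.sum_nonneg
  intro a _
  by_cases ha : a = astar
  · subst ha; simp
  · nlinarith [hmono a ha, hq a]
end

section
/- The modified cross-entropy update satisfies the no-gravity-well condition: if A is a finite type with |A| ≥ 2, a* ∈ A, u ≥ 0, and θ' is the MCE update of θ : A → ℝ with step u at a*, then the distinguished action receives the maximal policy increment, i.e. for every a ∈ A, softmax θ' (a*) − softmax θ (a*) ≥ softmax θ' (a) − softmax θ (a). -/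
open Finset Real

theorem softmax_eq_inv_sum_exp_sub {A : Type*} [Fintype A] (θ : A → ℝ) (a : A) :
    softmax θ a = (∑ b, exp (θ b - θ a))⁻¹ := by
  simp only [softmax, exp_sub, ← sum_div, inv_div]

theorem softmax_le_softmax_of_forall_sub_le {A : Type*} [Fintype A] {θ θ' : A → ℝ} {a : A}
    (h : ∀ b, θ' a - θ a ≤ θ' b - θ b) : softmax θ' a ≤ softmax θ a := by
  rw [softmax_eq_inv_sum_exp_sub, softmax_eq_inv_sum_exp_sub]
  refine inv_anti₀ (sum_pos (fun b _ => exp_pos _) ⟨a, mem_univ a⟩) ?_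
  exact sum_le_sum fun b _ => exp_le_exp.mpr (by linarith [h b])

theorem mce_no_gravity_well_general {A : Type*} [Fintype A]
    (astar : A) (u : ℝ) (hu : 0 ≤ u)
    (θ θ' : A → ℝ)
    (hstar : θ' astar = θ astar + u)
    (hother : ∀ a, a ≠ astar → θ' a = θ a - u / ((Fintype.card A : ℝ) - 1)) :
    ∀ a, softmax θ' a - softmax θ a ≤ softmax θ' astar - softmax θ astar := by
  set c := u / ((Fintype.card A : ℝ) - 1)
  have hc : 0 ≤ c := by
    have : (1 : ℝ) ≤ Fintype.card A := by exact_mod_cast Fintype.card_pos_iff.mpr ⟨astar⟩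
    exact div_nonneg hu (by linarith)
  have hincrement : ∀ b, -c ≤ θ' b - θ b ∧ θ' b - θ b ≤ u := by
    intro b
    by_cases hb : b = astar
    · subst hb; constructor <;> linarith
    · rw [hother b hb]; constructor <;> linarith
  intro a
  by_cases ha : a = astar
  · rw [ha]
  have hlose : softmax θ' a ≤ softmax θ a :=
    softmax_le_softmax_of_forall_sub_le fun b => by linarith [hother a ha, (hincrement b).1]
  have hgain : softmax θ astar ≤ softmax θ' astar :=
    softmax_le_softmax_of_forall_sub_le fun b => by linarith [(hincrement b).2]
  linarith

/-- The modified cross-entropy update satisfies the no-gravity-well condition: the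
distinguished action receives the maximal policy increment. -/
theorem mce_no_gravity_well {A : Type*} [Fintype A] [DecidableEq A]
    (hA : 2 ≤ Fintype.card A) (astar : A) (u : ℝ) (hu : 0 ≤ u)
    (θ θ' : A → ℝ)
    (hstar : θ' astar = θ astar + u)
    (hother : ∀ a, a ≠ astar → θ' a = θ a - u / ((Fintype.card A : ℝ) - 1)) :
    ∀ a, softmax θ' a - softmax θ a ≤ softmax θ' astar - softmax θ astar :=
  mce_no_gravity_well_general astar u hu θ θ' hstar hother
end

section
/- Euclidean projection onto the standard simplex preserves the location of the maximal increment: let m ≥ 1, let θ be a point of the standard simplex of ℝ^m (coordinates nonnegative, summing to 1), let δ : Fin m → ℝ be any vector, and let θ' be a point of the standard simplex at minimal Euclidean distance from θ + δ (i.e. ‖(θ+δ) − θ'‖ ≤ ‖(θ+δ) − y‖ for every y in the simplex). If k* maximizes δ over Fin m, then for every k, θ'(k*) − θ(k*) ≥ θ'(k) − θ(k). -/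
/-- Euclidean projection onto the standard simplex preserves the location of the
maximal increment. -/
theorem simplex_projection_max_increment (m : ℕ) (hm : 1 ≤ m)
    (θ δ θ' : Fin m → ℝ)
    (hθ_nonneg : ∀ k, 0 ≤ θ k) (hθ_sum : ∑ k, θ k = 1)
    (hθ'_nonneg : ∀ k, 0 ≤ θ' k) (hθ'_sum : ∑ k, θ' k = 1)
    (hmin : ∀ y : Fin m → ℝ, (∀ k, 0 ≤ y k) → ∑ k, y k = 1 →
      Real.sqrt (∑ k, ((θ k + δ k) - θ' k) ^ 2) ≤
        Real.sqrt (∑ k, ((θ k + δ k) - y k) ^ 2))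
    (kstar : Fin m) (hkstar : ∀ k, δ k ≤ δ kstar) :
    ∀ k, θ' k - θ k ≤ θ' kstar - θ kstar := by
  by_contra hcon
  push_neg at hcon
  obtain ⟨kbad, hkbad⟩ := hcon
  haveI : NeZero m := ⟨by omega⟩
  -- pick k0 maximizing the increment
  obtain ⟨k0, -, hk0⟩ := Finset.exists_max_image (Finset.univ : Finset (Fin m))
    (fun k => θ' k - θ k) ⟨kbad, Finset.mem_univ kbad⟩
  have hk0max : ∀ k, θ' k - θ k ≤ θ' k0 - θ k0 := fun k => hk0 k (Finset.mem_univ k)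
  have hk0gt : θ' kstar - θ kstar < θ' k0 - θ k0 := lt_of_lt_of_le hkbad (hk0max kbad)
  have hsum0 : ∑ k, (θ k - θ' k) = 0 := by
    rw [Finset.sum_sub_distrib, hθ_sum, hθ'_sum]; ring
  -- max increment is positive
  have hpos : 0 < θ' k0 - θ k0 := by
    rcases lt_or_ge 0 (θ' k0 - θ k0) with h | h
    · exact h
    · exfalso
      have hall : ∀ k ∈ Finset.univ, θ k - θ' k = 0 := by
        rw [← Finset.sum_eq_zero_iff_of_nonneg
          (fun k _ => by have := hk0max k; linarith)]
        exact hsum0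
      have h1 := hall kstar (Finset.mem_univ kstar)
      have h2 := hall kbad (Finset.mem_univ kbad)
      linarith
  have hθ'k0 : 0 < θ' k0 := lt_of_le_of_lt (hθ_nonneg k0) (by linarith)
  have hne : k0 ≠ kstar := by rintro rfl; linarith
  set c : ℝ := (δ kstar - δ k0) + ((θ' k0 - θ k0) - (θ' kstar - θ kstar)) with hc
  have hcpos : 0 < c := by have := hkstar k0; simp [hc]; linarith
  set ε : ℝ := min (θ' k0) (c / 2) with hε
  have hεpos : 0 < ε := lt_min hθ'k0 (by linarith)
  have hεle : ε ≤ θ' k0 := min_le_left _ _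
  have hεltc : ε < c := lt_of_le_of_lt (min_le_right _ _) (by linarith)
  set y : Fin m → ℝ := fun k =>
    θ' k + (if k = kstar then ε else 0) - (if k = k0 then ε else 0) with hy
  have hynn : ∀ k, 0 ≤ y k := by
    intro k
    by_cases h1 : k = kstar
    · have h2 : k ≠ k0 := by rw [h1]; exact fun h => hne h.symm
      simp [hy, h1, h2, hne, hne.symm]
      have h3 := hθ'_nonneg kstar; linarith
    · by_cases h2 : k = k0
      · simp [hy, h1, h2, hne, hne.symm]; linarith
      · simp [hy, h1, h2]; exact hθ'_nonneg k
  have hysum : ∑ k, y k = 1 := by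
    simp only [hy]
    rw [Finset.sum_sub_distrib, Finset.sum_add_distrib, hθ'_sum,
      Finset.sum_ite_eq' Finset.univ kstar (fun _ => ε),
      Finset.sum_ite_eq' Finset.univ k0 (fun _ => ε)]
    simp
  set A : Fin m → ℝ := fun k => θ k + δ k with hA
  have key : ∀ k, (A k - y k) ^ 2 = (A k - θ' k) ^ 2
      + (if k = kstar then 2 * ε * (θ' kstar - A kstar) + ε ^ 2 else 0)
      + (if k = k0 then 2 * ε * (A k0 - θ' k0) + ε ^ 2 else 0) := by
    intro k
    by_cases h1 : k = kstar
    · have h2 : k ≠ k0 := by rw [h1]; exact fun h => hne h.symm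
      simp [hy, h1, h2, hne, hne.symm]; ring
    · by_cases h2 : k = k0
      · simp [hy, h1, h2, hne, hne.symm]; ring
      · simp [hy, h1, h2]
  have hlt : ∑ k, (A k - y k) ^ 2 < ∑ k, (A k - θ' k) ^ 2 := by
    have : ∑ k, (A k - y k) ^ 2 = ∑ k, (A k - θ' k) ^ 2
        + (2 * ε * (θ' kstar - A kstar) + ε ^ 2)
        + (2 * ε * (A k0 - θ' k0) + ε ^ 2) := by
      calc ∑ k, (A k - y k) ^ 2
          = ∑ k, ((A k - θ' k) ^ 2
            + (if k = kstar then 2 * ε * (θ' kstar - A kstar) + ε ^ 2 else 0)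
            + (if k = k0 then 2 * ε * (A k0 - θ' k0) + ε ^ 2 else 0)) := by
            exact Finset.sum_congr rfl (fun k _ => key k)
        _ = _ := by
            rw [Finset.sum_add_distrib, Finset.sum_add_distrib,
              Finset.sum_ite_eq' Finset.univ kstar, Finset.sum_ite_eq' Finset.univ k0]
            simp
    rw [this]
    have hc2 : 2 * ε * (θ' kstar - A kstar) + ε ^ 2 + (2 * ε * (A k0 - θ' k0) + ε ^ 2)
        = 2 * ε * (ε - c) := by simp only [hA, hc]; ring
    nlinarith [mul_pos hεpos (sub_pos.mpr hεltc)]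
  have hmono : Real.sqrt (∑ k, (A k - y k) ^ 2) < Real.sqrt (∑ k, (A k - θ' k) ^ 2) :=
    Real.sqrt_lt_sqrt (Finset.sum_nonneg fun k _ => sq_nonneg _) hlt
  have := hmin y hynn hysum
  simp only [hA] at hmono
  linarith
end

section
/- Policy gradient updates in two dimensions are slow to unlearn (abstract form): let π : ℝ × ℝ → ℝ take values in [0,1], let g : ℝ → ℝ × ℝ, let θ₀ ∈ ℝ², η > 0 and n ∈ ℕ. Assume: (monotonicity of π) π is nondecreasing in its first coordinate and nonincreasing in its second coordinate; (gradient sign and concavity) for all p, p' with π(θ₀) ≤ p ≤ p' ≤ 1, the first component satisfies g₁(p) ≥ g₁(p') ≥ 0 and the second satisfies g₂(p) ≤ g₂(p') ≤ 0. Define the sequence θ_t by θ_{t+1} = θ_t + η · g(π(θ_t)) for 0 ≤ t < n (n 'forward' updates) and θ_{t+1} = θ_t − η · g(π(θ_t)) for n ≤ t < 2n (n 'opposite' updates). Then the first coordinate of θ_{2n} is ≥ that of θ₀, the second coordinate of θ_{2n} is ≤ that of θ₀, and consequently π(θ_{2n}) ≥ π(θ₀); i.e. n opposite updates do not suffice to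 undo n forward updates. -/
/-- Policy gradient updates in two dimensions are slow to unlearn (abstract form):
after `n` forward updates followed by `n` opposite updates, the policy probability of
the first action is still at least its initial value. -/
theorem pg_slow_unlearning_abstract
    (π : ℝ × ℝ → ℝ) (g : ℝ → ℝ × ℝ) (θ₀ : ℝ × ℝ) (η : ℝ) (hη : 0 < η) (n : ℕ)
    (hrange : ∀ z, π z ∈ Set.Icc (0 : ℝ) 1)
    (hmono_fst : ∀ x x' y : ℝ, x ≤ x' → π (x, y) ≤ π (x', y))
    (hmono_snd : ∀ x y y' : ℝ, y ≤ y' → π (x, y') ≤ π (x, y))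
    (hg : ∀ p p' : ℝ, π θ₀ ≤ p → p ≤ p' → p' ≤ 1 →
      0 ≤ (g p').1 ∧ (g p').1 ≤ (g p).1 ∧ (g p).2 ≤ (g p').2 ∧ (g p').2 ≤ 0)
    (θ : ℕ → ℝ × ℝ) (h0 : θ 0 = θ₀)
    (hfwd : ∀ t, t < n → θ (t + 1) = θ t + η • g (π (θ t)))
    (hbwd : ∀ t, n ≤ t → t < 2 * n → θ (t + 1) = θ t - η • g (π (θ t))) :
    θ₀.1 ≤ (θ (2 * n)).1 ∧ (θ (2 * n)).2 ≤ θ₀.2 ∧ π θ₀ ≤ π (θ (2 * n)) := by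
  have hπmono : ∀ a b : ℝ × ℝ, a.1 ≤ b.1 → b.2 ≤ a.2 → π a ≤ π b := by
    intro a b h1 h2
    calc π a = π (a.1, a.2) := by rw [Prod.mk.eta]
      _ ≤ π (b.1, a.2) := hmono_fst _ _ _ h1
      _ ≤ π (b.1, b.2) := hmono_snd _ _ _ h2
      _ = π b := by rw [Prod.mk.eta]
  -- forward step monotone in coordinates, plus invariant vs θ₀
  have key : ∀ t, t ≤ n → θ₀.1 ≤ (θ t).1 ∧ (θ t).2 ≤ θ₀.2 := by
    intro t
    induction t with
    | zero => intro _; rw [h0]; exact ⟨le_rfl, le_rfl⟩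
    | succ t ih =>
      intro ht
      have ht' : t < n := Nat.lt_of_succ_le ht
      obtain ⟨h1, h2⟩ := ih ht'.le
      have hp0 : π θ₀ ≤ π (θ t) := hπmono _ _ h1 h2
      obtain ⟨hg1, -, -, hg2⟩ := hg (π (θ t)) (π (θ t)) hp0 le_rfl (hrange _).2
      rw [hfwd t ht']
      constructor
      · have : 0 ≤ η * (g (π (θ t))).1 := mul_nonneg hη.le hg1
        simp only [Prod.fst_add, Prod.smul_fst, smul_eq_mul]
        linarith
      · have : η * (g (π (θ t))).2 ≤ 0 := mul_nonpos_of_nonneg_of_nonpos hη.le hg2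
        simp only [Prod.snd_add, Prod.smul_snd, smul_eq_mul]
        linarith
  have step : ∀ t, t < n → (θ t).1 ≤ (θ (t+1)).1 ∧ (θ (t+1)).2 ≤ (θ t).2 := by
    intro t ht
    obtain ⟨h1, h2⟩ := key t ht.le
    have hp0 : π θ₀ ≤ π (θ t) := hπmono _ _ h1 h2
    obtain ⟨hg1, -, -, hg2⟩ := hg (π (θ t)) (π (θ t)) hp0 le_rfl (hrange _).2
    rw [hfwd t ht]
    constructor
    · have : 0 ≤ η * (g (π (θ t))).1 := mul_nonneg hη.le hg1
      simp only [Prod.fst_add, Prod.smul_fst, smul_eq_mul]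
      linarith
    · have : η * (g (π (θ t))).2 ≤ 0 := mul_nonpos_of_nonneg_of_nonpos hη.le hg2
      simp only [Prod.snd_add, Prod.smul_snd, smul_eq_mul]
      linarith
  have main : ∀ j, j ≤ n →
      (θ (n - j)).1 ≤ (θ (n + j)).1 ∧ (θ (n + j)).2 ≤ (θ (n - j)).2 := by
    intro j
    induction j with
    | zero => intro _; simp
    | succ j ih =>
      intro hj
      have hjn : j < n := Nat.lt_of_succ_le hj
      obtain ⟨ih1, ih2⟩ := ih hjn.le
      set k := n - (j + 1) with hkdef
      have hkn : k < n := by omega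
      have hk1 : k + 1 = n - j := by omega
      have hkey := key k hkn.le
      have hp0k : π θ₀ ≤ π (θ k) := hπmono _ _ hkey.1 hkey.2
      have hstep := step k hkn
      have hpk : π (θ k) ≤ π (θ (k + 1)) := hπmono _ _ hstep.1 hstep.2
      have hpnj : π (θ (k + 1)) ≤ π (θ (n + j)) := by
        rw [hk1]; exact hπmono _ _ ih1 ih2
      obtain ⟨-, hg1, hg2, -⟩ :=
        hg (π (θ k)) (π (θ (n + j))) hp0k (hpk.trans hpnj) (hrange _).2
      have hbk := hbwd (n + j) (Nat.le_add_right _ _) (by omega)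
      have e1 : (θ (n + (j + 1))).1 = (θ (n + j)).1 - η * (g (π (θ (n + j)))).1 := by
        rw [show n + (j + 1) = (n + j) + 1 by ring, hbk]
        simp [smul_eq_mul]
      have e1' : (θ (n + (j + 1))).2 = (θ (n + j)).2 - η * (g (π (θ (n + j)))).2 := by
        rw [show n + (j + 1) = (n + j) + 1 by ring, hbk]
        simp [smul_eq_mul]
      have e2 : (θ (k + 1)).1 = (θ k).1 + η * (g (π (θ k))).1 := by
        rw [hfwd k hkn]; simp [smul_eq_mul]
      have e2' : (θ (k + 1)).2 = (θ k).2 + η * (g (π (θ k))).2 := by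
        rw [hfwd k hkn]; simp [smul_eq_mul]
      have ih1' : (θ (k + 1)).1 ≤ (θ (n + j)).1 := by rw [hk1]; exact ih1
      have ih2' : (θ (n + j)).2 ≤ (θ (k + 1)).2 := by rw [hk1]; exact ih2
      have m1 : η * (g (π (θ (n + j)))).1 ≤ η * (g (π (θ k))).1 :=
        mul_le_mul_of_nonneg_left hg1 hη.le
      have m2 : η * (g (π (θ k))).2 ≤ η * (g (π (θ (n + j)))).2 :=
        mul_le_mul_of_nonneg_left hg2 hη.le
      constructor
      · linarith [e1, e2, ih1', m1]
      · linarith [e1', e2', ih2', m2]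
  obtain ⟨f1, f2⟩ := main n le_rfl
  rw [Nat.sub_self, h0, ← two_mul] at f1 f2
  exact ⟨f1, f2, hπmono _ _ f1 f2⟩
end

section
/- Unlearning slowness of the tabular two-action softmax policy gradient: let η > 0, let s(x) = exp(x)/(1 + exp(x))², and define δ : ℕ → ℝ by δ₀ = 0, δ_{t+1} = δ_t + 2η·s(δ_t) for 0 ≤ t < n (forward updates with values q = (1,0)), and δ_{t+1} = δ_t − 2η·s(δ_t) for n ≤ t < 2n (opposite updates with values q = (0,1)). Then for every k ≤ n, δ_{n+k} ≥ δ_{n−k}; in particular δ_{2n} ≥ 0, so at least n opposite updates are needed to return the policy to (or below) its initial uniform value. -/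
private lemma s_pos' (x : ℝ) : 0 < Real.exp x / (1 + Real.exp x) ^ 2 := by
  apply div_pos (Real.exp_pos x)
  positivity

private lemma s_anti' {a b : ℝ} (ha : 0 ≤ a) (hab : a ≤ b) :
    Real.exp b / (1 + Real.exp b) ^ 2 ≤ Real.exp a / (1 + Real.exp a) ^ 2 := by
  have hea := Real.exp_pos a
  have heb := Real.exp_pos b
  rw [div_le_div_iff₀ (by positivity) (by positivity)]
  have h1 : (1:ℝ) ≤ Real.exp a := Real.one_le_exp ha
  have h2 : Real.exp a ≤ Real.exp b := Real.exp_le_exp.2 hab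
  nlinarith [mul_le_mul h1 h2 hea.le (by linarith),
    sq_nonneg (Real.exp a - Real.exp b), sq_nonneg (Real.exp a * Real.exp b - 1)]

/-- Unlearning slowness of the tabular two-action softmax policy gradient. -/
theorem pg_softmax_two_action_slow_unlearning
    (η : ℝ) (hη : 0 < η) (n : ℕ)
    (s : ℝ → ℝ) (hs : ∀ x, s x = Real.exp x / (1 + Real.exp x) ^ 2)
    (δ : ℕ → ℝ) (h0 : δ 0 = 0)
    (hfwd : ∀ t, t < n → δ (t + 1) = δ t + 2 * η * s (δ t))
    (hbwd : ∀ t, n ≤ t → t < 2 * n → δ (t + 1) = δ t - 2 * η * s (δ t)) :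
    (∀ k, k ≤ n → δ (n - k) ≤ δ (n + k)) ∧ 0 ≤ δ (2 * n) := by
  have spos : ∀ x, 0 < s x := fun x => (hs x) ▸ s_pos' x
  have santi : ∀ a b : ℝ, 0 ≤ a → a ≤ b → s b ≤ s a := by
    intro a b ha hab; rw [hs a, hs b]; exact s_anti' ha hab
  -- nonnegativity on [0, n]
  have hnn : ∀ t, t ≤ n → 0 ≤ δ t := by
    intro t
    induction t with
    | zero => intro _; simp [h0]
    | succ t ih =>
      intro ht
      have ht' : t < n := Nat.lt_of_succ_le ht
      rw [hfwd t ht']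
      have := ih ht'.le
      nlinarith [spos (δ t)]
  have main : ∀ k, k ≤ n → δ (n - k) ≤ δ (n + k) := by
    intro k
    induction k with
    | zero => intro _; simp
    | succ k ih =>
      intro hk
      have hkn : k < n := Nat.lt_of_succ_le hk
      have ihk : δ (n - k) ≤ δ (n + k) := ih hkn.le
      have hstep : n - (k + 1) + 1 = n - k := by omega
      have hlt : n - (k + 1) < n := by omega
      have hfw : δ (n - k) = δ (n - (k + 1)) + 2 * η * s (δ (n - (k + 1))) := by
        rw [← hstep]; exact hfwd _ hlt
      have hbw : δ (n + (k + 1)) = δ (n + k) - 2 * η * s (δ (n + k)) := by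
        have : n + k + 1 = n + (k + 1) := by omega
        rw [← this]; exact hbwd (n + k) (Nat.le_add_right n k) (by omega)
      have hnn1 : 0 ≤ δ (n - (k + 1)) := hnn _ (by omega)
      have hle1 : δ (n - (k + 1)) ≤ δ (n - k) := by
        rw [hfw]; nlinarith [spos (δ (n - (k + 1)))]
      have hle2 : δ (n - (k + 1)) ≤ δ (n + k) := le_trans hle1 ihk
      have hsle : s (δ (n + k)) ≤ s (δ (n - (k + 1))) := santi _ _ hnn1 hle2
      rw [hbw]
      have : δ (n - (k + 1)) = δ (n - k) - 2 * η * s (δ (n - (k + 1))) := by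
        rw [hfw]; ring
      rw [this]
      have := mul_le_mul_of_nonneg_left hsle (by linarith : (0:ℝ) ≤ 2 * η)
      linarith
  refine ⟨main, ?_⟩
  have h2n : 2 * n = n + n := by ring
  have := main n le_rfl
  simp [h0] at this
  rw [h2n]
  exact this
end

section
/- Exact unlearning time of the two-dimensional direct-parametrization update with constant learning rate: let η > 0, n ∈ ℕ, and define p : ℕ → ℝ by p₀ = 1/2, p_t = min(1, p_{t−1} + η/2) for 1 ≤ t ≤ n (forward projected-gradient updates), and p_{n+k} = max(0, p_{n+k−1} − η/2) for k ≥ 1 (opposite projected-gradient updates). Then the least k ∈ ℕ such that p_{n+k} ≤ 1/2 equals min(n, ⌈1/η⌉). -/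
/-- Exact unlearning time of the two-dimensional direct-parametrization update with
constant learning rate. -/
theorem direct_param_exact_unlearning_time
    (η : ℝ) (hη : 0 < η) (n : ℕ) (p : ℕ → ℝ)
    (h0 : p 0 = 1 / 2)
    (hfwd : ∀ t, t < n → p (t + 1) = min 1 (p t + η / 2))
    (hbwd : ∀ k : ℕ, p (n + k + 1) = max 0 (p (n + k) - η / 2)) :
    sInf {k : ℕ | p (n + k) ≤ 1 / 2} = min n ⌈1 / η⌉₊ := by
  have hfwd' : ∀ t, t ≤ n → p t = min 1 (1 / 2 + t * (η / 2)) := by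
    intro t ht
    induction t with
    | zero => rw [h0]; norm_num
    | succ t ih =>
      rw [hfwd t (by omega), ih (by omega)]
      rcases le_or_gt (1 / 2 + (t : ℝ) * (η / 2)) 1 with h | h
      · rw [min_eq_right h]
        congr 1
        push_cast; ring
      · rw [min_eq_left h.le, min_eq_left (by nlinarith), min_eq_left (by
          push_cast; nlinarith)]
  have hbwd' : ∀ k : ℕ, p (n + k) = max 0 (p n - k * (η / 2)) := by
    intro k
    induction k with
    | zero =>
      simp only [Nat.add_zero, Nat.cast_zero, zero_mul, sub_zero]
      rw [max_eq_right]
      rw [hfwd' n le_rfl]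
      positivity
    | succ k ih =>
      have := hbwd k
      show p (n + k + 1) = _
      rw [this, ih]
      rcases le_or_gt 0 (p n - (k : ℝ) * (η / 2)) with h | h
      · rw [max_eq_right h]
        congr 1
        push_cast; ring
      · rw [max_eq_left h.le, max_eq_left (by push_cast; nlinarith),
          max_eq_left (by push_cast; nlinarith)]
  have hpn : p n = min 1 (1 / 2 + n * (η / 2)) := hfwd' n le_rfl
  set m := min n ⌈1 / η⌉₊ with hm
  have hceil : (1 : ℝ) / η ≤ ⌈1 / η⌉₊ := Nat.le_ceil _
  have hmem : p (n + m) ≤ 1 / 2 := by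
    rw [hbwd' m, hpn]
    rcases le_total n ⌈1 / η⌉₊ with h | h
    · have hmn : m = n := min_eq_left h
      rw [hmn]
      have : min 1 (1 / 2 + (n : ℝ) * (η / 2)) ≤ 1 / 2 + n * (η / 2) :=
        min_le_right _ _
      simp only [max_le_iff]
      constructor <;> nlinarith
    · have hmn : m = ⌈1 / η⌉₊ := min_eq_right h
      rw [hmn]
      have h1 : min 1 (1 / 2 + (n : ℝ) * (η / 2)) ≤ 1 := min_le_left _ _
      have h2 : (1 : ℝ) ≤ (⌈1 / η⌉₊ : ℝ) * η := (div_le_iff₀ hη).mp hceil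
      simp only [max_le_iff]
      constructor <;> nlinarith
  have hlow : ∀ k ∈ {k : ℕ | p (n + k) ≤ 1 / 2}, m ≤ k := by
    intro k hk
    by_contra hlt
    push_neg at hlt
    have hkn : k < n := lt_of_lt_of_le hlt (min_le_left _ _)
    have hkc : k < ⌈1 / η⌉₊ := lt_of_lt_of_le hlt (min_le_right _ _)
    have hkr : (k : ℝ) < 1 / η := by
      exact_mod_cast Nat.lt_ceil.mp hkc
    have hkη : (k : ℝ) * η < 1 := (lt_div_iff₀ hη).mp hkr
    have hknr : (k : ℝ) < n := by exact_mod_cast hkn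
    simp only [Set.mem_setOf_eq] at hk
    rw [hbwd' k, hpn] at hk
    have hgt : (1 : ℝ) / 2 < min 1 (1 / 2 + (n : ℝ) * (η / 2)) - k * (η / 2) := by
      rcases min_cases (1 : ℝ) (1 / 2 + (n : ℝ) * (η / 2)) with ⟨h1, _⟩ | ⟨h1, _⟩ <;>
        rw [h1] <;> nlinarith
    have := le_max_right (0 : ℝ) (min 1 (1 / 2 + (n : ℝ) * (η / 2)) - k * (η / 2))
    linarith
  exact le_antisymm (Nat.sInf_le hmem) (le_csInf ⟨m, hmem⟩ hlow)
end

section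
/- Logarithmic unlearning time of the two-action cross-entropy softmax update with constant learning rate: let η > 0, n ∈ ℕ, and define δ : ℕ → ℝ by δ₀ = 0, δ_t = δ_{t−1} + 2η/(1 + exp(δ_{t−1})) for 1 ≤ t ≤ n (forward cross-entropy updates toward action a₁), and δ_{n+k} = δ_{n+k−1} − 2η/(1 + exp(−δ_{n+k−1})) for k ≥ 1 (opposite cross-entropy updates toward action a₂). Then for every natural number n' with n' ≥ 2 + (1/η)·log(1 + 2ηn), one has δ_{n+n'} ≤ 0. -/
/-- Logarithmic unlearning time of the two-action cross-entropy softmax update with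
constant learning rate. -/
theorem ce_softmax_log_unlearning_time
    (η : ℝ) (hη : 0 < η) (n : ℕ) (δ : ℕ → ℝ)
    (h0 : δ 0 = 0)
    (hfwd : ∀ t, t < n → δ (t + 1) = δ t + 2 * η / (1 + Real.exp (δ t)))
    (hbwd : ∀ k : ℕ, δ (n + k + 1) = δ (n + k) - 2 * η / (1 + Real.exp (-(δ (n + k))))) :
    ∀ n' : ℕ, 2 + (1 / η) * Real.log (1 + 2 * η * n) ≤ (n' : ℝ) → δ (n + n') ≤ 0 := by
  -- Forward phase: 0 ≤ δ t and δ t ≤ 2η + log(1 + 2ηt) for t ≤ n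
  have hfwd2 : ∀ t, t ≤ n → 0 ≤ δ t ∧ δ t ≤ 2 * η + Real.log (1 + 2 * η * t) := by
    intro t
    induction t with
    | zero =>
      intro _
      rw [h0]
      norm_num
      have : Real.log 1 = 0 := Real.log_one
      nlinarith [this]
    | succ t ih =>
      intro ht
      have ht' : t < n := lt_of_lt_of_le (Nat.lt_succ_self t) ht
      obtain ⟨h1, h2⟩ := ih ht'.le
      have hstep := hfwd t ht'
      have hexp1 : (1 : ℝ) ≤ Real.exp (δ t) := by
        rw [← Real.exp_zero]; exact Real.exp_le_exp.mpr h1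
      have ha : (0:ℝ) < 1 + 2 * η * t := by positivity
      have hb : (0:ℝ) < 1 + 2 * η * (t+1) := by positivity
      have hcast : ((t+1 : ℕ) : ℝ) = (t : ℝ) + 1 := by push_cast; ring
      constructor
      · have : 0 < 2 * η / (1 + Real.exp (δ t)) := by positivity
        rw [hstep]; linarith
      · rw [hstep, hcast]
        by_cases hc : δ t ≤ Real.log (1 + 2 * η * (t+1))
        · -- small case: step ≤ η
          have hstep_le : 2 * η / (1 + Real.exp (δ t)) ≤ η := by
            rw [div_le_iff₀ (by positivity)]
            nlinarith
          linarith
        · -- large case: exp (δ t) ≥ 1 + 2η(t+1)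
          push_neg at hc
          have hexpb : 1 + 2 * η * (t+1) ≤ Real.exp (δ t) := by
            calc 1 + 2 * η * (t+1) = Real.exp (Real.log (1 + 2 * η * (t+1))) :=
                  (Real.exp_log hb).symm
              _ ≤ Real.exp (δ t) := Real.exp_le_exp.mpr hc.le
          have hstep_le : 2 * η / (1 + Real.exp (δ t)) ≤ 2 * η / (1 + 2 * η * (t+1)) := by
            apply div_le_div_of_nonneg_left (by positivity) hb
            linarith
          -- log(1+2η(t+1)) - log(1+2ηt) ≥ 2η/(1+2η(t+1))
          have hlog : Real.log ((1 + 2*η*t) / (1 + 2*η*(t+1))) ≤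
              (1 + 2*η*t) / (1 + 2*η*(t+1)) - 1 :=
            Real.log_le_sub_one_of_pos (by positivity)
          have hlogdiv : Real.log ((1 + 2*η*t) / (1 + 2*η*(t+1))) =
              Real.log (1 + 2*η*t) - Real.log (1 + 2*η*(t+1)) :=
            Real.log_div (by positivity) (by positivity)
          have hkey : 2 * η / (1 + 2 * η * (t+1)) ≤
              Real.log (1 + 2*η*(t+1)) - Real.log (1 + 2*η*t) := by
            rw [hlogdiv] at hlog
            have : (1 + 2*η*t) / (1 + 2*η*(t+1)) - 1 = -(2*η) / (1 + 2*η*(t+1)) := by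
              field_simp; ring
            rw [this] at hlog
            have h2 : -(2*η) / (1 + 2*η*(t+1)) = -(2*η / (1 + 2*η*(t+1))) := by ring
            rw [h2] at hlog
            linarith
          linarith
  obtain ⟨-, hdn⟩ := hfwd2 n le_rfl
  -- Backward phase
  have hbk : ∀ k : ℕ, δ (n + k) ≤ 0 ∨ δ (n + k) ≤ δ n - k * η := by
    intro k
    induction k with
    | zero => right; simp
    | succ k ih =>
      have hstep := hbwd k
      have hsp : 0 < 2 * η / (1 + Real.exp (-(δ (n + k)))) := by positivity
      have hnk : n + (k+1) = n + k + 1 := by ring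
      rcases ih with h | h
      · left; rw [hnk, hstep]; linarith
      · by_cases hc : δ (n + k) ≤ 0
        · left; rw [hnk, hstep]; linarith
        · right
          push_neg at hc
          have hexp : Real.exp (-(δ (n + k))) ≤ 1 := by
            rw [← Real.exp_zero]
            exact Real.exp_le_exp.mpr (by linarith)
          have hge : η ≤ 2 * η / (1 + Real.exp (-(δ (n + k)))) := by
            rw [le_div_iff₀ (by positivity)]
            nlinarith
          rw [hnk, hstep]
          push_cast
          linarith
  intro n' hn'
  have hL : 0 ≤ Real.log (1 + 2 * η * n) := Real.log_nonneg (by nlinarith [mul_nonneg (mul_nonneg (by norm_num : (0:ℝ) ≤ 2) hη.le) (Nat.cast_nonneg n : (0:ℝ) ≤ n)])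
  have hmul : 2 * η + Real.log (1 + 2 * η * n) ≤ (n' : ℝ) * η := by
    have := mul_le_mul_of_nonneg_left hn' hη.le
    have hinv : η * (1 / η) = 1 := by field_simp
    nlinarith [this]
  rcases hbk n' with h | h
  · exact h
  · linarith
end

section
/- Unlearning lower bound under square-root-decaying learning rates: for every integer n ≥ 1 and every n' ∈ ℕ, if ∑_{t=1}^{n'} 1/√(t+n) ≥ ∑_{t=1}^{n} 1/√t, then n' ≥ 3n − 4√n + 1. -/
open Real Finset

lemma sum_inv_sqrt_lower (n : ℕ) :
    2 * Real.sqrt (n + 1) - 2 ≤ ∑ t ∈ Finset.Icc 1 n, (1 : ℝ) / Real.sqrt t := by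
  induction n with
  | zero => simp
  | succ n ih =>
    rw [Finset.sum_Icc_succ_top (by omega)]
    have ha : Real.sqrt ((n : ℝ) + 1) ^ 2 = (n : ℝ) + 1 :=
      Real.sq_sqrt (by positivity)
    have hb : Real.sqrt ((n : ℝ) + 2) ^ 2 = (n : ℝ) + 2 :=
      Real.sq_sqrt (by positivity)
    have ha0 : 0 < Real.sqrt ((n : ℝ) + 1) := Real.sqrt_pos.mpr (by positivity)
    have hb0 : 0 ≤ Real.sqrt ((n : ℝ) + 2) := Real.sqrt_nonneg _
    have key : 2 * Real.sqrt ((n : ℝ) + 2) - 2 ≤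
        (2 * Real.sqrt ((n : ℝ) + 1) - 2) + 1 / Real.sqrt ((n : ℝ) + 1) := by
      nlinarith [sq_nonneg (Real.sqrt ((n : ℝ) + 2) - Real.sqrt ((n : ℝ) + 1)),
        one_div_mul_cancel ha0.ne', mul_pos ha0 ha0,
        div_nonneg zero_le_one ha0.le]
    calc 2 * Real.sqrt ((n + 1 : ℕ) + 1) - 2
        = 2 * Real.sqrt ((n : ℝ) + 2) - 2 := by push_cast; ring_nf
      _ ≤ (2 * Real.sqrt ((n : ℝ) + 1) - 2) + 1 / Real.sqrt ((n : ℝ) + 1) := key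
      _ ≤ (∑ t ∈ Finset.Icc 1 n, (1 : ℝ) / Real.sqrt t) + 1 / Real.sqrt ((n + 1 : ℕ)) := by
          push_cast; linarith [ih]

lemma sum_inv_sqrt_upper (n n' : ℕ) :
    ∑ t ∈ Finset.Icc 1 n', (1 : ℝ) / Real.sqrt ((t : ℝ) + n) ≤
      2 * Real.sqrt ((n' : ℝ) + n) - 2 * Real.sqrt n := by
  induction n' with
  | zero => simp
  | succ m ih =>
    rw [Finset.sum_Icc_succ_top (by omega)]
    have ha : Real.sqrt ((m : ℝ) + n) ^ 2 = (m : ℝ) + n :=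
      Real.sq_sqrt (by positivity)
    have hb : Real.sqrt ((m : ℝ) + n + 1) ^ 2 = (m : ℝ) + n + 1 :=
      Real.sq_sqrt (by positivity)
    have ha0 : 0 ≤ Real.sqrt ((m : ℝ) + n) := Real.sqrt_nonneg _
    have hb0 : 0 < Real.sqrt ((m : ℝ) + n + 1) := Real.sqrt_pos.mpr (by positivity)
    have key : 1 / Real.sqrt ((m : ℝ) + n + 1) ≤
        2 * Real.sqrt ((m : ℝ) + n + 1) - 2 * Real.sqrt ((m : ℝ) + n) := by
      rw [div_le_iff₀ hb0]
      nlinarith [sq_nonneg (Real.sqrt ((m : ℝ) + n + 1) - Real.sqrt ((m : ℝ) + n))]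
    have e1 : ((m + 1 : ℕ) : ℝ) + n = (m : ℝ) + n + 1 := by push_cast; ring
    calc (∑ t ∈ Finset.Icc 1 m, (1 : ℝ) / Real.sqrt ((t : ℝ) + n))
          + 1 / Real.sqrt (((m + 1 : ℕ) : ℝ) + n)
        ≤ (2 * Real.sqrt ((m : ℝ) + n) - 2 * Real.sqrt n)
          + (2 * Real.sqrt ((m : ℝ) + n + 1) - 2 * Real.sqrt ((m : ℝ) + n)) := by
          rw [e1]; linarith [ih, key]
      _ = 2 * Real.sqrt (((m + 1 : ℕ) : ℝ) + n) - 2 * Real.sqrt n := by rw [e1]; ring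

/-- Unlearning lower bound under square-root-decaying learning rates (arithmetic core). -/
theorem sqrt_decay_unlearning_lower_bound
    (n : ℕ) (hn : 1 ≤ n) (n' : ℕ)
    (h : ∑ t ∈ Finset.Icc 1 n, (1 : ℝ) / Real.sqrt t ≤
      ∑ t ∈ Finset.Icc 1 n', (1 : ℝ) / Real.sqrt ((t : ℝ) + n)) :
    3 * (n : ℝ) - 4 * Real.sqrt n + 1 ≤ (n' : ℝ) := by
  have h1 := sum_inv_sqrt_lower n
  have h2 := sum_inv_sqrt_upper n n'
  have hchain : 2 * Real.sqrt ((n : ℝ) + 1) - 2 ≤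
      2 * Real.sqrt ((n' : ℝ) + n) - 2 * Real.sqrt n := by linarith
  have hs : Real.sqrt ((n : ℝ)) ≤ Real.sqrt ((n : ℝ) + 1) :=
    Real.sqrt_le_sqrt (by linarith)
  have hs1 : (1 : ℝ) ≤ Real.sqrt n := by
    rw [show (1 : ℝ) = Real.sqrt 1 by simp]
    exact Real.sqrt_le_sqrt (by exact_mod_cast hn)
  have hu : Real.sqrt ((n' : ℝ) + n) ^ 2 = (n' : ℝ) + n :=
    Real.sq_sqrt (by positivity)
  have hsn : Real.sqrt (n : ℝ) ^ 2 = (n : ℝ) :=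
    Real.sq_sqrt (by positivity)
  have hge : 2 * Real.sqrt (n : ℝ) - 1 ≤ Real.sqrt ((n' : ℝ) + n) := by linarith
  nlinarith [hge, hs1, hu, hsn, Real.sqrt_nonneg ((n' : ℝ) + n)]
end

section
/- Unlearning time of the two-dimensional direct-parametrization update with decaying learning rates: let η₁ > 0, n ≥ 1 an integer, and define p : ℕ → ℝ by p₀ = 1/2, p_t = min(1, p_{t−1} + η₁/(2√t)) for 1 ≤ t ≤ n (forward projected-gradient updates), and p_{n+k} = max(0, p_{n+k−1} − η₁/(2√(n+k))) for k ≥ 1 (opposite projected-gradient updates). Then for every natural number n' with n' ≥ min(3n + 4√n + 1, (1 + 1/η₁)² + 2√n·(1 + 1/η₁)), one has p_{n+n'} ≤ 1/2. -/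
lemma aux_sqrt_succ_le (a : ℝ) (ha : 0 < a) :
    Real.sqrt (a + 1) ≤ Real.sqrt a + 1 / (2 * Real.sqrt a) := by
  have hs : 0 < Real.sqrt a := Real.sqrt_pos.mpr ha
  have h1 : Real.sqrt a ^ 2 = a := Real.sq_sqrt ha.le
  have h2 : Real.sqrt (a + 1) ^ 2 = a + 1 := Real.sq_sqrt (by linarith)
  rw [← sub_le_iff_le_add', le_div_iff₀ (by positivity)]
  nlinarith [sq_nonneg (Real.sqrt (a + 1) - Real.sqrt a)]

lemma aux_le_sqrt_succ (a : ℝ) (ha : 0 ≤ a) :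
    Real.sqrt a + 1 / (2 * Real.sqrt (a + 1)) ≤ Real.sqrt (a + 1) := by
  have hs1 : 0 < Real.sqrt (a + 1) := Real.sqrt_pos.mpr (by linarith)
  have h1 : Real.sqrt a ^ 2 = a := Real.sq_sqrt ha
  have h2 : Real.sqrt (a + 1) ^ 2 = a + 1 := Real.sq_sqrt (by linarith)
  rw [← le_sub_iff_add_le', div_le_iff₀ (by positivity)]
  nlinarith [sq_nonneg (Real.sqrt (a + 1) - Real.sqrt a)]

/-- Unlearning time of the two-dimensional direct-parametrization update with decaying
learning rates. -/
theorem direct_param_decaying_unlearning_time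
    (η₁ : ℝ) (hη₁ : 0 < η₁) (n : ℕ) (hn : 1 ≤ n) (p : ℕ → ℝ)
    (h0 : p 0 = 1 / 2)
    (hfwd : ∀ t, t < n → p (t + 1) = min 1 (p t + η₁ / (2 * Real.sqrt ((t : ℝ) + 1))))
    (hbwd : ∀ k : ℕ, p (n + k + 1) =
      max 0 (p (n + k) - η₁ / (2 * Real.sqrt ((n : ℝ) + (k : ℝ) + 1)))) :
    ∀ n' : ℕ,
      min (3 * (n : ℝ) + 4 * Real.sqrt n + 1)
          ((1 + 1 / η₁) ^ 2 + 2 * Real.sqrt n * (1 + 1 / η₁)) ≤ (n' : ℝ) →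
      p (n + n') ≤ 1 / 2 := by
  intro n' hn'
  -- Step 1: bounds on p at time n
  have hA : ∀ t, t ≤ n → p t ≤ 1 ∧ p t ≤ 1 / 2 + η₁ * Real.sqrt t := by
    intro t
    induction t with
    | zero => intro _; norm_num [h0]
    | succ t ih =>
      intro ht
      obtain ⟨h1, h2⟩ := ih (le_of_lt ht)
      rw [hfwd t ht]
      refine ⟨min_le_left _ _, le_trans (min_le_right _ _) ?_⟩
      have hs := aux_le_sqrt_succ (t : ℝ) (Nat.cast_nonneg t)
      have hd : η₁ / (2 * Real.sqrt ((t : ℝ) + 1)) =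
          η₁ * (1 / (2 * Real.sqrt ((t : ℝ) + 1))) := by ring
      have hmul := mul_le_mul_of_nonneg_left
        (by linarith : 1 / (2 * Real.sqrt ((t : ℝ) + 1)) ≤
          Real.sqrt ((t : ℝ) + 1) - Real.sqrt t) hη₁.le
      push_cast
      rw [hd]
      linarith
  have hpn1 : p n ≤ 1 := (hA n le_rfl).1
  have hpn2 : p n ≤ 1 / 2 + η₁ * Real.sqrt n := (hA n le_rfl).2
  -- Step 2: suppose for contradiction p (n+n') > 1/2; then all intermediate > 1/2
  by_contra hcon
  push_neg at hcon
  have hall : ∀ j, j ≤ n' → 1 / 2 < p (n + j) := by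
    intro j hj
    by_contra hle
    push_neg at hle
    have hpres : ∀ m : ℕ, p (n + (j + m)) ≤ 1 / 2 := by
      intro m
      induction m with
      | zero => simpa using hle
      | succ m ih =>
        have hb := hbwd (j + m)
        have hnn : (0:ℝ) ≤ η₁ / (2 * Real.sqrt ((n : ℝ) + (↑(j + m) : ℝ) + 1)) := by
          positivity
        rw [show n + (j + (m + 1)) = n + (j + m) + 1 by ring, hb]
        refine max_le (by norm_num) (by linarith)
    have := hpres (n' - j)
    rw [show j + (n' - j) = n' from Nat.add_sub_cancel' hj] at this
    linarith
  -- Step 3: telescoping lower bound on the decrease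
  have htel : ∀ m : ℕ, (∀ j, j ≤ m → 1 / 2 < p (n + j)) →
      p (n + m) + η₁ * (Real.sqrt ((n : ℝ) + m + 1) - Real.sqrt ((n : ℝ) + 1)) ≤ p n := by
    intro m
    induction m with
    | zero => intro _; simp
    | succ m ih =>
      intro hallm
      have ih' := ih (fun j hj => hallm j (hj.trans (Nat.le_succ m)))
      have hp1 : 1 / 2 < p (n + (m + 1)) := hallm (m + 1) le_rfl
      have hb := hbwd m
      have heq : p (n + m + 1) = p (n + m) - η₁ / (2 * Real.sqrt ((n : ℝ) + m + 1)) := by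
        rw [hb]
        rcases max_choice 0 (p (n + m) - η₁ / (2 * Real.sqrt ((n : ℝ) + (m : ℝ) + 1))) with h | h
        · rw [show n + (m + 1) = n + m + 1 from rfl, hb, h] at hp1; norm_num at hp1
        · exact h
      have hkey := aux_sqrt_succ_le ((n : ℝ) + m + 1) (by positivity)
      have hd : η₁ / (2 * Real.sqrt ((n : ℝ) + m + 1)) =
          η₁ * (1 / (2 * Real.sqrt ((n : ℝ) + m + 1))) := by ring
      have hmul := mul_le_mul_of_nonneg_left
        (by linarith : Real.sqrt ((n : ℝ) + m + 1 + 1) - Real.sqrt ((n : ℝ) + m + 1) ≤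
          1 / (2 * Real.sqrt ((n : ℝ) + m + 1))) hη₁.le
      have hidx : n + (m + 1) = n + m + 1 := rfl
      rw [hidx, heq]
      push_cast
      rw [hd] at *
      have : Real.sqrt ((n : ℝ) + (m + 1) + 1) = Real.sqrt ((n : ℝ) + m + 1 + 1) := by ring_nf
      rw [this]
      linarith
  have hT := htel n' hall
  have hS : 1 / 2 < p (n + n') := hall n' le_rfl
  have h1 : η₁ * (Real.sqrt ((n : ℝ) + n' + 1) - Real.sqrt ((n : ℝ) + 1)) < p n - 1 / 2 := by
    linarith
  -- bound √(n+1) ≤ √n + 1/2 using n ≥ 1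
  have hsn : (1 : ℝ) ≤ Real.sqrt n := by
    rw [show (1:ℝ) = Real.sqrt 1 by simp]
    exact Real.sqrt_le_sqrt (by exact_mod_cast hn)
  have hup : Real.sqrt ((n : ℝ) + 1) ≤ Real.sqrt n + 1 / 2 := by
    have h := aux_sqrt_succ_le (n : ℝ) (by exact_mod_cast hn)
    have : 1 / (2 * Real.sqrt n) ≤ 1 / 2 := by
      rw [div_le_div_iff₀ (by positivity) (by norm_num)]
      linarith
    linarith
  rcases min_le_iff.mp hn' with hcase | hcase
  · -- case n' ≥ 3n + 4√n + 1
    have hsq : 2 * Real.sqrt n + 1 ≤ Real.sqrt ((n : ℝ) + n' + 1) := by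
      have hb : (2 * Real.sqrt n + 1) ^ 2 ≤ (n : ℝ) + n' + 1 := by
        have := Real.sq_sqrt (Nat.cast_nonneg n : (0:ℝ) ≤ n)
        nlinarith
      calc 2 * Real.sqrt n + 1 = Real.sqrt ((2 * Real.sqrt n + 1) ^ 2) := by
            rw [Real.sqrt_sq (by positivity)]
        _ ≤ Real.sqrt ((n : ℝ) + n' + 1) := Real.sqrt_le_sqrt hb
    have hSlb : Real.sqrt n + 1 / 2 ≤
        Real.sqrt ((n : ℝ) + n' + 1) - Real.sqrt ((n : ℝ) + 1) := by linarith
    have := mul_le_mul_of_nonneg_left hSlb hη₁.le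
    nlinarith [Real.sqrt_nonneg (n : ℝ)]
  · -- case n' ≥ (1+1/η₁)² + 2√n(1+1/η₁)
    set c : ℝ := 1 + 1 / η₁ with hc
    clear_value c
    have hcpos : 0 < c := by rw [hc]; positivity
    have hsq : Real.sqrt n + c ≤ Real.sqrt ((n : ℝ) + n' + 1) := by
      have hb : (Real.sqrt n + c) ^ 2 ≤ (n : ℝ) + n' + 1 := by
        have := Real.sq_sqrt (Nat.cast_nonneg n : (0:ℝ) ≤ n)
        nlinarith
      calc Real.sqrt n + c = Real.sqrt ((Real.sqrt n + c) ^ 2) := by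
            rw [Real.sqrt_sq (by linarith [Real.sqrt_nonneg ((n:ℝ))])]
        _ ≤ Real.sqrt ((n : ℝ) + n' + 1) := Real.sqrt_le_sqrt hb
    have hSlb : c - 1 / 2 ≤
        Real.sqrt ((n : ℝ) + n' + 1) - Real.sqrt ((n : ℝ) + 1) := by
      nlinarith [hsq, hup]
    have hmul := mul_le_mul_of_nonneg_left hSlb hη₁.le
    have hval : η₁ * (c - 1 / 2) = η₁ / 2 + 1 := by
      rw [hc]; field_simp; ring
    linarith
end

section
/- Unlearning time of the two-action cross-entropy softmax update with decaying learning rates: let η₁ > 0, n ≥ 1 an integer, and define δ : ℕ → ℝ by δ₀ = 0, δ_t = δ_{t−1} + (2η₁/√t)·1/(1 + exp(δ_{t−1})) for 1 ≤ t ≤ n (forward cross-entropy updates toward a₁), and δ_{n+k} = δ_{n+k−1} − (2η₁/√(n+k))·1/(1 + exp(−δ_{n+k−1})) for k ≥ 1 (opposite cross-entropy updates toward a₂). Set L = log(1 + 4η₁√n). Then for every natural number n' with n' ≥ (4 + L/(2η₁))² + √n·(8 + L/η₁), one has δ_{n+n'} ≤ 0. -/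
private lemma ce_aux_exp_sub_one_le (x : ℝ) : Real.exp x - 1 ≤ x * Real.exp x := by
  have h := Real.add_one_le_exp (-x)
  rw [Real.exp_neg] at h
  have hp := Real.exp_pos x
  have h2 : (Real.exp x)⁻¹ * Real.exp x = 1 := inv_mul_cancel₀ (ne_of_gt hp)
  nlinarith [mul_le_mul_of_nonneg_right h hp.le]

private lemma ce_aux_sqrt_gap_lower (x : ℝ) (hx : 0 ≤ x) :
    1 / Real.sqrt (x + 1) ≤ 2 * (Real.sqrt (x + 1) - Real.sqrt x) := by
  have ha : (Real.sqrt x) ^ 2 = x := Real.sq_sqrt hx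
  have hb : (Real.sqrt (x + 1)) ^ 2 = x + 1 := Real.sq_sqrt (by linarith)
  have ha0 : 0 ≤ Real.sqrt x := Real.sqrt_nonneg x
  have hb0 : 0 < Real.sqrt (x + 1) := Real.sqrt_pos.mpr (by linarith)
  rw [div_le_iff₀ hb0]
  nlinarith [sq_nonneg (Real.sqrt x - Real.sqrt (x + 1))]

private lemma ce_aux_sqrt_gap_upper (x : ℝ) (hx : 0 < x) :
    2 * (Real.sqrt (x + 1) - Real.sqrt x) ≤ 1 / Real.sqrt x := by
  have ha : (Real.sqrt x) ^ 2 = x := Real.sq_sqrt hx.le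
  have hb : (Real.sqrt (x + 1)) ^ 2 = x + 1 := Real.sq_sqrt (by linarith)
  have ha0 : 0 < Real.sqrt x := Real.sqrt_pos.mpr hx
  have hb0 : 0 ≤ Real.sqrt (x + 1) := Real.sqrt_nonneg _
  rw [le_div_iff₀ ha0]
  nlinarith [sq_nonneg (Real.sqrt x - Real.sqrt (x + 1))]

private lemma ce_aux_arith (A r s N : ℝ) (hA0 : 0 ≤ A) (hr1 : 1 ≤ r)
    (hs0 : 0 ≤ s) (hsr : s ≤ r + 1) (hss : s ^ 2 = r ^ 2 + 1)
    (hN : (4 + A) ^ 2 + r * (8 + 2 * A) ≤ N) :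
    (s + A + 1 / 2) ^ 2 ≤ r ^ 2 + N := by
  nlinarith [mul_le_mul_of_nonneg_right hsr hA0]

/-- Unlearning time of the two-action cross-entropy softmax update with decaying
learning rates. -/
theorem ce_softmax_decaying_unlearning_time
    (η₁ : ℝ) (hη₁ : 0 < η₁) (n : ℕ) (hn : 1 ≤ n) (δ : ℕ → ℝ)
    (h0 : δ 0 = 0)
    (hfwd : ∀ t, t < n → δ (t + 1) =
      δ t + (2 * η₁ / Real.sqrt ((t : ℝ) + 1)) * (1 / (1 + Real.exp (δ t))))
    (hbwd : ∀ k : ℕ, δ (n + k + 1) =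
      δ (n + k) - (2 * η₁ / Real.sqrt ((n : ℝ) + (k : ℝ) + 1)) *
        (1 / (1 + Real.exp (-(δ (n + k)))))) :
    ∀ n' : ℕ,
      (4 + Real.log (1 + 4 * η₁ * Real.sqrt n) / (2 * η₁)) ^ 2 +
          Real.sqrt n * (8 + Real.log (1 + 4 * η₁ * Real.sqrt n) / η₁) ≤ (n' : ℝ) →
      δ (n + n') ≤ 0 := by
  intro n' hn'
  have hr1 : (1 : ℝ) ≤ Real.sqrt n := by
    have h1 : (1 : ℝ) ≤ (n : ℝ) := by exact_mod_cast hn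
    calc (1 : ℝ) = Real.sqrt 1 := Real.sqrt_one.symm
      _ ≤ Real.sqrt n := Real.sqrt_le_sqrt h1
  -- Forward phase bound
  have hfact : ∀ t, t ≤ n →
      0 ≤ δ t ∧ Real.exp (δ t) ≤ 1 + 4 * η₁ * Real.exp η₁ * Real.sqrt (t : ℝ) := by
    intro t
    induction t with
    | zero =>
      intro _
      refine ⟨le_of_eq h0.symm, ?_⟩
      simp [h0, Real.exp_zero]
    | succ t ih =>
      intro hle
      have htn : t < n := Nat.lt_of_succ_le hle
      obtain ⟨hd0, hexp⟩ := ih htn.le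
      have h0t : (0 : ℝ) ≤ (t : ℝ) := Nat.cast_nonneg t
      have hs1 : (1 : ℝ) ≤ Real.sqrt ((t : ℝ) + 1) := by
        calc (1 : ℝ) = Real.sqrt 1 := Real.sqrt_one.symm
          _ ≤ Real.sqrt ((t : ℝ) + 1) := Real.sqrt_le_sqrt (by linarith)
      have hspos : (0 : ℝ) < Real.sqrt ((t : ℝ) + 1) := by linarith
      set s := Real.sqrt ((t : ℝ) + 1) with hs
      set ε := 2 * η₁ / s * (1 / (1 + Real.exp (δ t))) with hε
      have hrec : δ (t + 1) = δ t + ε := hfwd t htn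
      have hexp_pos : (0 : ℝ) < Real.exp (δ t) := Real.exp_pos _
      have h1e : (1 : ℝ) ≤ Real.exp (δ t) := Real.one_le_exp hd0
      have hε0 : 0 ≤ ε := by
        apply mul_nonneg (div_nonneg (by linarith) hspos.le)
        positivity
      have hεη : ε ≤ η₁ := by
        have h1 : 2 * η₁ / s ≤ 2 * η₁ := div_le_self (by linarith) hs1
        have h2 : 1 / (1 + Real.exp (δ t)) ≤ 1 / 2 :=
          one_div_le_one_div_of_le (by norm_num) (by linarith)
        calc ε ≤ 2 * η₁ * (1 / 2) := by
              apply mul_le_mul h1 h2 (by positivity) (by linarith)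
          _ = η₁ := by ring
      have hstep : Real.exp (δ (t + 1)) ≤ Real.exp (δ t) + 2 * η₁ / s * Real.exp η₁ := by
        rw [hrec, Real.exp_add]
        have e1 : Real.exp ε - 1 ≤ ε * Real.exp ε := ce_aux_exp_sub_one_le ε
        have e2 : Real.exp ε ≤ Real.exp η₁ := Real.exp_le_exp.mpr hεη
        have e3 : Real.exp (δ t) * ε ≤ 2 * η₁ / s := by
          have heq : Real.exp (δ t) * ε
              = 2 * η₁ / s * (Real.exp (δ t) / (1 + Real.exp (δ t))) := by
            rw [hε]; ring
          rw [heq]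
          have hdd : Real.exp (δ t) / (1 + Real.exp (δ t)) ≤ 1 := by
            rw [div_le_one (by linarith)]; linarith
          have hc : 0 ≤ 2 * η₁ / s := div_nonneg (by linarith) hspos.le
          calc 2 * η₁ / s * (Real.exp (δ t) / (1 + Real.exp (δ t)))
              ≤ 2 * η₁ / s * 1 := mul_le_mul_of_nonneg_left hdd hc
            _ = 2 * η₁ / s := by ring
        nlinarith [mul_le_mul_of_nonneg_left e1 hexp_pos.le,
          mul_le_mul_of_nonneg_left e2 (mul_nonneg hexp_pos.le hε0),
          mul_le_mul_of_nonneg_right e3 (Real.exp_pos η₁).le]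
      have hgap : 2 * η₁ / s * Real.exp η₁
          ≤ 4 * η₁ * Real.exp η₁ * (s - Real.sqrt (t : ℝ)) := by
        have hg := ce_aux_sqrt_gap_lower (t : ℝ) (Nat.cast_nonneg t)
        have hc : 0 ≤ 2 * η₁ * Real.exp η₁ := by positivity
        calc 2 * η₁ / s * Real.exp η₁ = (2 * η₁ * Real.exp η₁) * (1 / s) := by ring
          _ ≤ (2 * η₁ * Real.exp η₁) * (2 * (s - Real.sqrt (t : ℝ))) :=
              mul_le_mul_of_nonneg_left hg hc
          _ = 4 * η₁ * Real.exp η₁ * (s - Real.sqrt (t : ℝ)) := by ring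
      constructor
      · rw [hrec]; linarith
      · have hcast : Real.sqrt ((t + 1 : ℕ) : ℝ) = s := by push_cast; rw [hs]
        rw [hcast]
        linarith only [hstep, hexp, hgap]
  obtain ⟨hδn0, hδnexp⟩ := hfact n le_rfl
  set r := Real.sqrt (n : ℝ) with hrdef
  have hx0 : (0 : ℝ) < 1 + 4 * η₁ * r := by nlinarith
  have hδn : δ n ≤ η₁ + Real.log (1 + 4 * η₁ * r) := by
    have he1 : (1 : ℝ) ≤ Real.exp η₁ := Real.one_le_exp hη₁.le
    have h1 : Real.exp (δ n) ≤ Real.exp η₁ * (1 + 4 * η₁ * r) := by nlinarith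
    calc δ n = Real.log (Real.exp (δ n)) := (Real.log_exp _).symm
      _ ≤ Real.log (Real.exp η₁ * (1 + 4 * η₁ * r)) :=
          Real.log_le_log (Real.exp_pos _) h1
      _ = η₁ + Real.log (1 + 4 * η₁ * r) := by
          rw [Real.log_mul (Real.exp_ne_zero _) (ne_of_gt hx0), Real.log_exp]
  set L := Real.log (1 + 4 * η₁ * r) with hL
  have hL0 : 0 ≤ L := Real.log_nonneg (by nlinarith)
  by_contra hcon
  push_neg at hcon
  -- the backward phase is decreasing
  have hdec : ∀ k j, δ (n + k + j) ≤ δ (n + k) := by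
    intro k j
    induction j with
    | zero => exact le_rfl
    | succ j ih =>
      have hkj := hbwd (k + j)
      rw [show n + (k + j) = n + k + j from by omega] at hkj
      have hd : 0 ≤ 2 * η₁ / Real.sqrt ((n : ℝ) + ((k + j : ℕ) : ℝ) + 1) *
          (1 / (1 + Real.exp (-δ (n + k + j)))) := by
        apply mul_nonneg (div_nonneg (by linarith) (Real.sqrt_nonneg _))
        positivity
      rw [show n + k + (j + 1) = n + k + j + 1 from by omega, hkj]
      linarith only [ih, hd]
  have hpos : ∀ k, k ≤ n' → 0 < δ (n + k) := by
    intro k hk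
    have h := hdec k (n' - k)
    rw [show n + k + (n' - k) = n + n' from by omega] at h
    linarith
  -- telescoped lower bound on the decrease
  have hmain : ∀ k, k ≤ n' → δ (n + k) ≤ δ n
      - 2 * η₁ * (Real.sqrt ((n : ℝ) + (k : ℝ) + 1) - Real.sqrt ((n : ℝ) + 1)) := by
    intro k
    induction k with
    | zero => intro _; simp
    | succ k ih =>
      intro hk
      have hk' : k ≤ n' := by omega
      have ihk := ih hk'
      have hdk : 0 < δ (n + k) := hpos k hk'
      have hx1 : (1 : ℝ) < (n : ℝ) + (k : ℝ) + 1 := by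
        have h1 : (1 : ℝ) ≤ (n : ℝ) := by exact_mod_cast hn
        have h2 : (0 : ℝ) ≤ (k : ℝ) := Nat.cast_nonneg k
        linarith
      have hsx : (0 : ℝ) < Real.sqrt ((n : ℝ) + (k : ℝ) + 1) :=
        Real.sqrt_pos.mpr (by linarith)
      have he : Real.exp (-(δ (n + k))) ≤ 1 := by
        rw [← Real.exp_zero]
        exact Real.exp_le_exp.mpr (by linarith)
      have hd1 : (1 : ℝ) / 2 ≤ 1 / (1 + Real.exp (-(δ (n + k)))) := by
        apply one_div_le_one_div_of_le
        · positivity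
        · linarith
      have hdecr : η₁ / Real.sqrt ((n : ℝ) + (k : ℝ) + 1)
          ≤ 2 * η₁ / Real.sqrt ((n : ℝ) + (k : ℝ) + 1) *
            (1 / (1 + Real.exp (-(δ (n + k))))) := by
        have hc : 0 ≤ 2 * η₁ / Real.sqrt ((n : ℝ) + (k : ℝ) + 1) :=
          div_nonneg (by linarith) hsx.le
        calc η₁ / Real.sqrt ((n : ℝ) + (k : ℝ) + 1)
            = 2 * η₁ / Real.sqrt ((n : ℝ) + (k : ℝ) + 1) * (1 / 2) := by ring
          _ ≤ _ := mul_le_mul_of_nonneg_left hd1 hc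
      have hgap2 := ce_aux_sqrt_gap_upper ((n : ℝ) + (k : ℝ) + 1) (by linarith)
      have hgap3 : 2 * η₁ * (Real.sqrt ((n : ℝ) + (k : ℝ) + 1 + 1)
            - Real.sqrt ((n : ℝ) + (k : ℝ) + 1))
          ≤ η₁ / Real.sqrt ((n : ℝ) + (k : ℝ) + 1) := by
        have := mul_le_mul_of_nonneg_left hgap2 hη₁.le
        calc 2 * η₁ * (Real.sqrt ((n : ℝ) + (k : ℝ) + 1 + 1)
              - Real.sqrt ((n : ℝ) + (k : ℝ) + 1))
            = η₁ * (2 * (Real.sqrt ((n : ℝ) + (k : ℝ) + 1 + 1)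
              - Real.sqrt ((n : ℝ) + (k : ℝ) + 1))) := by ring
          _ ≤ η₁ * (1 / Real.sqrt ((n : ℝ) + (k : ℝ) + 1)) := this
          _ = η₁ / Real.sqrt ((n : ℝ) + (k : ℝ) + 1) := by ring
      have hrec := hbwd k
      have hidx : n + (k + 1) = n + k + 1 := by omega
      have hcast : (n : ℝ) + ((k + 1 : ℕ) : ℝ) + 1 = (n : ℝ) + (k : ℝ) + 1 + 1 := by
        push_cast; ring
      rw [hidx, hcast, hrec]
      linarith only [ihk, hdecr, hgap3]
  have hfin := hmain n' le_rfl
  -- arithmetic contradiction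
  have hη2 : (0 : ℝ) < 2 * η₁ := by linarith
  set A := L / (2 * η₁) with hA
  have hA0 : 0 ≤ A := div_nonneg hL0 hη2.le
  have hLη : L / η₁ = 2 * A := by rw [hA]; field_simp
  rw [hLη] at hn'
  have h2ηA : 2 * η₁ * A = L := by rw [hA]; field_simp
  have hr2 : r ^ 2 = (n : ℝ) := Real.sq_sqrt (Nat.cast_nonneg n)
  have hs0 : 0 ≤ Real.sqrt ((n : ℝ) + 1) := Real.sqrt_nonneg _
  have hss : (Real.sqrt ((n : ℝ) + 1)) ^ 2 = (n : ℝ) + 1 :=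
    Real.sq_sqrt (by positivity)
  have hsr : Real.sqrt ((n : ℝ) + 1) ≤ r + 1 := by
    calc Real.sqrt ((n : ℝ) + 1) ≤ Real.sqrt ((r + 1) ^ 2) :=
        Real.sqrt_le_sqrt (by nlinarith)
      _ = r + 1 := Real.sqrt_sq (by linarith)
  have htarget : Real.sqrt ((n : ℝ) + 1) + A + 1 / 2 ≤ Real.sqrt ((n : ℝ) + (n' : ℝ)) := by
    rw [Real.le_sqrt (by linarith) (by positivity)]
    have harith := ce_aux_arith A r (Real.sqrt ((n : ℝ) + 1)) ((n' : ℕ) : ℝ) hA0 hr1 hs0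
      hsr (by rw [hss, hr2]) (by linarith only [hn'])
    linarith only [harith, hr2]
  have hmono : Real.sqrt ((n : ℝ) + (n' : ℝ)) ≤ Real.sqrt ((n : ℝ) + (n' : ℝ) + 1) :=
    Real.sqrt_le_sqrt (by linarith)
  have hfinal : 2 * η₁ * (A + 1 / 2)
      ≤ 2 * η₁ * (Real.sqrt ((n : ℝ) + (n' : ℝ) + 1) - Real.sqrt ((n : ℝ) + 1)) := by
    apply mul_le_mul_of_nonneg_left _ hη2.le
    linarith
  have hLη1 : 2 * η₁ * (A + 1 / 2) = L + η₁ := by rw [mul_add, h2ηA]; ring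
  linarith only [hfin, hδn, hcon, hfinal, hLη1]
end

section
/- Logarithmic growth of a slowed exponential recursion: let c > 0 and let X : ℕ → ℝ be a nondecreasing sequence with X₀ = 0 and X_{n+1} ≤ X_n + c·exp(−X_n) for all n. Then for every n ∈ ℕ, X_n ≤ c + log(1 + c·n). -/
/-- Logarithmic growth of a slowed exponential recursion. -/
theorem slowed_exp_recursion_log_growth
    (c : ℝ) (hc : 0 < c) (X : ℕ → ℝ) (hmono : Monotone X)
    (h0 : X 0 = 0)
    (hrec : ∀ n : ℕ, X (n + 1) ≤ X n + c * Real.exp (-(X n))) :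
    ∀ n : ℕ, X n ≤ c + Real.log (1 + c * n) := by
  have hXnonneg : ∀ n, 0 ≤ X n := fun n => h0 ▸ hmono (Nat.zero_le n)
  have key : ∀ n : ℕ, Real.exp (X n) ≤ 1 + c * Real.exp c * n := by
    intro n
    induction n with
    | zero => simp [h0]
    | succ n ih =>
      have hmon : X n ≤ X (n + 1) := hmono (Nat.le_succ n)
      have hstep : Real.exp (X (n + 1)) - Real.exp (X n) ≤ c * Real.exp c := by
        have h1 : Real.exp (X (n + 1)) * (1 + X n - X (n + 1)) ≤ Real.exp (X n) := by
          have ht := Real.add_one_le_exp (X n - X (n + 1))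
          calc Real.exp (X (n + 1)) * (1 + X n - X (n + 1))
              = Real.exp (X (n + 1)) * ((X n - X (n + 1)) + 1) := by ring
            _ ≤ Real.exp (X (n + 1)) * Real.exp (X n - X (n + 1)) :=
                mul_le_mul_of_nonneg_left ht (Real.exp_pos _).le
            _ = Real.exp (X n) := by rw [← Real.exp_add]; ring_nf
        have h2 : Real.exp (X (n + 1)) - Real.exp (X n) ≤
            Real.exp (X (n + 1)) * (X (n + 1) - X n) := by nlinarith
        have h3 : X (n + 1) - X n ≤ c * Real.exp (-(X n)) := by linarith [hrec n]
        have h4 : Real.exp (X (n + 1)) ≤ Real.exp (X n + c) := by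
          apply Real.exp_le_exp.mpr
          have hle1 : Real.exp (-(X n)) ≤ 1 := by
            rw [Real.exp_le_one_iff]
            linarith [hXnonneg n]
          nlinarith [hrec n]
        calc Real.exp (X (n + 1)) - Real.exp (X n)
            ≤ Real.exp (X (n + 1)) * (X (n + 1) - X n) := h2
          _ ≤ Real.exp (X n + c) * (c * Real.exp (-(X n))) :=
              mul_le_mul h4 h3 (by linarith) (Real.exp_pos _).le
          _ = c * Real.exp c := by
              rw [Real.exp_add, Real.exp_neg]
              have := (Real.exp_pos (X n)).ne'
              field_simp
      push_cast
      nlinarith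
  intro n
  have h3 : (0:ℝ) < 1 + c * n := by positivity
  have h2 : (1:ℝ) ≤ Real.exp c := by nlinarith [Real.add_one_le_exp c]
  have h1 : Real.exp (X n) ≤ Real.exp c * (1 + c * n) := by
    have hk := key n
    nlinarith [Nat.cast_nonneg (α := ℝ) n]
  have : Real.exp (X n) ≤ Real.exp (c + Real.log (1 + c * n)) := by
    rw [Real.exp_add, Real.exp_log h3]; exact h1
  exact Real.exp_le_exp.mp this
end

section
/- Logarithmic growth of a slowed exponential recursion with decaying steps: let c > 0 and let X : ℕ → ℝ be a nondecreasing sequence with X₀ = 0 and X_{n+1} ≤ X_n + (c/√(n+1))·exp(−X_n) for all n. Then for every n ∈ ℕ, X_n ≤ c + log(1 + 2c·√n). -/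
lemma sqrt_step_aux (n : ℕ) :
    2 * Real.sqrt n + 1 / Real.sqrt ((n : ℝ) + 1) ≤ 2 * Real.sqrt ((n : ℝ) + 1) := by
  set a := Real.sqrt n with ha
  set b := Real.sqrt ((n : ℝ) + 1) with hb
  have ha0 : 0 ≤ a := Real.sqrt_nonneg _
  have hb0 : 0 < b := Real.sqrt_pos.2 (by positivity)
  have hb2 : b ^ 2 = a ^ 2 + 1 := by
    rw [ha, hb, Real.sq_sqrt (by positivity), Real.sq_sqrt (Nat.cast_nonneg n)]
  have h : 1 / b ≤ 2 * b - 2 * a := by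
    rw [div_le_iff₀ hb0]
    nlinarith [sq_nonneg (a - b)]
  linarith

/-- Logarithmic growth of a slowed exponential recursion with decaying steps. -/
theorem slowed_exp_recursion_decaying_log_growth
    (c : ℝ) (hc : 0 < c) (X : ℕ → ℝ) (hmono : Monotone X)
    (h0 : X 0 = 0)
    (hrec : ∀ n : ℕ, X (n + 1) ≤ X n + (c / Real.sqrt ((n : ℝ) + 1)) * Real.exp (-(X n))) :
    ∀ n : ℕ, X n ≤ c + Real.log (1 + 2 * c * Real.sqrt n) := by
  have hXnn : ∀ n, 0 ≤ X n := fun n => h0 ▸ hmono (Nat.zero_le n)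
  have key : ∀ n : ℕ, Real.exp (X n) ≤ 1 + 2 * c * Real.exp c * Real.sqrt n := by
    intro n
    induction n with
    | zero => simp [h0]
    | succ n ih =>
      have hs1 : (0:ℝ) < Real.sqrt ((n:ℝ) + 1) := Real.sqrt_pos.2 (by positivity)
      set v := c / Real.sqrt ((n : ℝ) + 1) * Real.exp (-(X n)) with hv
      have hv0 : 0 ≤ v := by positivity
      have hvc : v ≤ c := by
        have h1 : Real.exp (-(X n)) ≤ 1 := Real.exp_le_one_iff.2 (by linarith [hXnn n])
        have h2 : (1:ℝ) ≤ Real.sqrt ((n:ℝ) + 1) := by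
          have := Real.sqrt_le_sqrt (show (1:ℝ) ≤ (n:ℝ) + 1 by linarith [Nat.cast_nonneg (α := ℝ) n])
          rwa [Real.sqrt_one] at this
        have h3 : c / Real.sqrt ((n:ℝ) + 1) ≤ c := by
          rw [div_le_iff₀ hs1]; nlinarith
        calc v ≤ c / Real.sqrt ((n:ℝ) + 1) * 1 := by
                apply mul_le_mul_of_nonneg_left h1 (by positivity)
          _ ≤ c := by rw [mul_one]; exact h3
      have hev : Real.exp v ≤ 1 + v * Real.exp v := by
        have := Real.add_one_le_exp (-v)
        have h4 : (1 - v) * Real.exp v ≤ 1 := by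
          have h5 : (1 - v) ≤ Real.exp (-v) := by linarith
          calc (1 - v) * Real.exp v ≤ Real.exp (-v) * Real.exp v :=
                mul_le_mul_of_nonneg_right h5 (Real.exp_pos v).le
            _ = 1 := by rw [← Real.exp_add]; simp
        nlinarith
      have hstep : Real.exp (X (n+1)) ≤ Real.exp (X n) + c / Real.sqrt ((n:ℝ)+1) * Real.exp c := by
        calc Real.exp (X (n+1)) ≤ Real.exp (X n + v) := Real.exp_le_exp.2 (hrec n)
          _ = Real.exp (X n) * Real.exp v := Real.exp_add _ _
          _ ≤ Real.exp (X n) * (1 + v * Real.exp v) :=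
              mul_le_mul_of_nonneg_left hev (Real.exp_pos _).le
          _ = Real.exp (X n) + (Real.exp (X n) * Real.exp (-(X n))) * (c / Real.sqrt ((n:ℝ)+1)) * Real.exp v := by
              rw [hv]; ring
          _ = Real.exp (X n) + c / Real.sqrt ((n:ℝ)+1) * Real.exp v := by
              have hee : Real.exp (X n) * Real.exp (-(X n)) = 1 := by
                rw [← Real.exp_add]; simp
              rw [hee, one_mul]
          _ ≤ Real.exp (X n) + c / Real.sqrt ((n:ℝ)+1) * Real.exp c := by
              gcongr
      have hsq := sqrt_step_aux n
      have hpush : (↑(n+1) : ℝ) = (n:ℝ) + 1 := by push_cast; ring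
      rw [hpush]
      have hce : 0 < c * Real.exp c := by positivity
      calc Real.exp (X (n+1)) ≤ (1 + 2 * c * Real.exp c * Real.sqrt n) + c / Real.sqrt ((n:ℝ)+1) * Real.exp c := by
            linarith [hstep]
        _ ≤ 1 + 2 * c * Real.exp c * Real.sqrt ((n:ℝ)+1) := by
            have := mul_le_mul_of_nonneg_left hsq hce.le
            have hrw : c / Real.sqrt ((n:ℝ)+1) * Real.exp c
                = c * Real.exp c * (1 / Real.sqrt ((n:ℝ)+1)) := by ring
            nlinarith
  intro n
  have hpos : (0:ℝ) < 1 + 2 * c * Real.exp c * Real.sqrt n := by positivity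
  have hpos2 : (0:ℝ) < 1 + 2 * c * Real.sqrt n := by positivity
  have h1 : X n ≤ Real.log (1 + 2 * c * Real.exp c * Real.sqrt n) := by
    rw [← Real.log_exp (X n)]
    exact Real.log_le_log (Real.exp_pos _) (key n)
  have h2 : 1 + 2 * c * Real.exp c * Real.sqrt n ≤ Real.exp c * (1 + 2 * c * Real.sqrt n) := by
    have : (1:ℝ) ≤ Real.exp c := Real.one_le_exp hc.le
    nlinarith [Real.sqrt_nonneg (n:ℝ), hc]
  have h3 : Real.log (Real.exp c * (1 + 2 * c * Real.sqrt n))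
      = c + Real.log (1 + 2 * c * Real.sqrt n) := by
    rw [Real.log_mul (Real.exp_ne_zero c) (ne_of_gt hpos2), Real.log_exp]
  calc X n ≤ Real.log (1 + 2 * c * Real.exp c * Real.sqrt n) := h1
    _ ≤ Real.log (Real.exp c * (1 + 2 * c * Real.sqrt n)) := Real.log_le_log hpos h2
    _ = c + Real.log (1 + 2 * c * Real.sqrt n) := h3
end

section
/- Quasi-linear growth of the compounded recovery-time recursion: let η > 0 and let X : ℕ → ℝ be a nondecreasing sequence with X₀ = 1 and X_{n+1} ≤ X_n + 2 + (1/η)·log(1 + 2η·X_n) for all n. Then for every integer n ≥ 8, X_n ≤ (32·exp(8η+3)/η³)·n·log n. -/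
set_option maxHeartbeats 1000000 in
/-- Quasi-linear growth of the compounded recovery-time recursion. -/
theorem compounded_recovery_time_quasilinear
    (η : ℝ) (hη : 0 < η) (X : ℕ → ℝ) (hmono : Monotone X)
    (h0 : X 0 = 1)
    (hrec : ∀ n : ℕ, X (n + 1) ≤ X n + 2 + (1 / η) * Real.log (1 + 2 * η * X n)) :
    ∀ n : ℕ, 8 ≤ n → X n ≤ (32 * Real.exp (8 * η + 3) / η ^ 3) * n * Real.log n := by
  set K := 32 * Real.exp (8 * η + 3) / η ^ 3 with hKdef
  have hη3 : (0:ℝ) < η ^ 3 := pow_pos hη 3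
  have hKpos : 0 < K := div_pos (by positivity) hη3
  have hX1 : ∀ n, 1 ≤ X n := fun n => h0 ▸ hmono (Nat.zero_le n)
  -- exponential lower bounds
  have hexp3 : (4:ℝ) ≤ Real.exp 3 := by linarith [Real.add_one_le_exp 3]
  have hsq : 16 * η ^ 2 ≤ Real.exp (8 * η) := by
    have h1 : 4 * η ≤ Real.exp (4 * η) := by linarith [Real.add_one_le_exp (4 * η)]
    have h2 : (4 * η) ^ 2 ≤ (Real.exp (4 * η)) ^ 2 :=
      pow_le_pow_left₀ (by positivity) h1 2
    have h3 : (Real.exp (4 * η)) ^ 2 = Real.exp (8 * η) := by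
      rw [← Real.exp_nat_mul]; norm_num; ring_nf
    nlinarith [h2, h3]
  have hcube : 512 * η ^ 3 ≤ 27 * Real.exp (8 * η) := by
    have h1 : 8 * η / 3 ≤ Real.exp (8 * η / 3) := by
      linarith [Real.add_one_le_exp (8 * η / 3)]
    have h2 : (8 * η / 3) ^ 3 ≤ (Real.exp (8 * η / 3)) ^ 3 :=
      pow_le_pow_left₀ (by positivity) h1 3
    have h3 : (Real.exp (8 * η / 3)) ^ 3 = Real.exp (8 * η) := by
      rw [← Real.exp_nat_mul]; norm_num; ring_nf
    rw [h3] at h2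
    nlinarith [h2]
  have hexpadd : Real.exp (8 * η + 3) = Real.exp (8 * η) * Real.exp 3 := Real.exp_add _ _
  have hexppos : (0:ℝ) < Real.exp (8 * η) := Real.exp_pos _
  -- ηK ≥ 48
  have hηK : 48 ≤ η * K := by
    rw [hKdef, ← mul_div_assoc, le_div_iff₀ hη3, hexpadd]
    have hp : 64 * η ^ 2 ≤ Real.exp (8 * η) * Real.exp 3 := by
      nlinarith [hsq, hexp3, hexppos, sq_nonneg η]
    have hp2 := mul_le_mul_of_nonneg_left hp (le_of_lt hη)
    nlinarith [hp2, hη3]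
  -- K ≥ 821
  have hK821 : (821:ℝ) ≤ K := by
    rw [hKdef, le_div_iff₀ hη3, hexpadd]
    nlinarith [hcube, hexp3, hexppos]
  have hK4 : (4:ℝ) ≤ K := by linarith
  -- core scalar inequality: 2 + (1/η) log(3ηK) ≤ K
  have hcore : 2 + (1 / η) * Real.log (3 * η * K) ≤ K := by
    set s := Real.sqrt (3 * η * K) with hs
    have hsnn : 0 ≤ s := Real.sqrt_nonneg _
    have h3ηK : (0:ℝ) < 3 * η * K := by positivity
    have hs2 : s ^ 2 = 3 * η * K := Real.sq_sqrt (le_of_lt h3ηK)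
    have hspos : 0 < s := Real.sqrt_pos.mpr h3ηK
    have hlog : Real.log (3 * η * K) ≤ 2 * s := by
      have : Real.log (3 * η * K) = 2 * Real.log s := by
        rw [← hs2, Real.log_pow]; push_cast; ring
      rw [this]
      have := Real.log_le_sub_one_of_pos hspos
      linarith
    -- 4s ≤ ηK since 16 s² = 48 ηK ≤ (ηK)²
    have h4s : 4 * s ≤ η * K := by
      nlinarith [hs2, hηK, hsnn, sq_nonneg (η * K - 4 * s)]
    have h1η : (0:ℝ) < 1 / η := by positivity
    have step1 : (1 / η) * Real.log (3 * η * K) ≤ (1 / η) * (2 * s) :=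
      mul_le_mul_of_nonneg_left hlog (le_of_lt h1η)
    have step2 : (1 / η) * (2 * s) ≤ K / 2 := by
      have heq : (1 / η) * (2 * s) = (2 * s) / η := by ring
      rw [heq, div_le_div_iff₀ hη two_pos]
      nlinarith [h4s]
    linarith
  clear_value K
  -- crude exponential bound to handle the base case
  have hcrude : ∀ n, X n ≤ 2 * 3 ^ n - 1 := by
    intro n
    induction n with
    | zero => norm_num [h0]
    | succ n ih =>
      have hx := hX1 n
      have hpos : (0:ℝ) < 1 + 2 * η * X n := by nlinarith
      have hlog : Real.log (1 + 2 * η * X n) ≤ 2 * η * X n := by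
        linarith [Real.log_le_sub_one_of_pos hpos]
      have h2 : (1 / η) * Real.log (1 + 2 * η * X n) ≤ 2 * X n := by
        have h3 : (1 / η) * Real.log (1 + 2 * η * X n) ≤ (1 / η) * (2 * η * X n) :=
          mul_le_mul_of_nonneg_left hlog (by positivity)
        have h4 : (1 / η) * (2 * η * X n) = 2 * X n := by
          field_simp
        linarith
      have h5 := hrec n
      have h6 : X (n + 1) ≤ 3 * X n + 2 := by linarith
      have h7 : (3:ℝ) ^ (n + 1) = 3 * 3 ^ n := by rw [pow_succ]; ring
      nlinarith [h6, ih]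
  have hlog8 : (2:ℝ) ≤ Real.log 8 := by
    have h2 : Real.log 8 = 3 * Real.log 2 := by
      rw [show (8:ℝ) = 2 ^ 3 by norm_num, Real.log_pow]; push_cast; ring
    linarith [Real.log_two_gt_d9]
  -- main induction
  intro n hn
  induction n, hn using Nat.le_induction with
  | base =>
    have h8 : X 8 ≤ 13121 := by
      have := hcrude 8
      norm_num at this
      linarith
    have h13 : (13121:ℝ) ≤ K * 8 * Real.log 8 := by
      nlinarith [hK821, hlog8, hKpos]
    have goal8 : X 8 ≤ K * 8 * Real.log 8 := by linarith
    exact_mod_cast goal8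
  | succ n hn ih =>
    have hN8 : (8:ℝ) ≤ (n:ℝ) := by exact_mod_cast hn
    have hNpos : (0:ℝ) < (n:ℝ) := by linarith
    set N : ℝ := (n:ℝ) with hNdef
    set L : ℝ := Real.log N with hLdef
    clear_value N L
    have hL2 : 2 ≤ L := by
      have : Real.log 8 ≤ Real.log N := Real.log_le_log (by norm_num) hN8
      linarith
    have hLpos : 0 < L := by linarith
    have hXn : X n ≤ K * N * L := ih
    have hx1 : 1 ≤ X n := hX1 n
    have hpos1 : (0:ℝ) < 1 + 2 * η * X n := by nlinarith
    -- 1 + 2ηXₙ ≤ 3ηK·N·L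
    have hηKnn : (0:ℝ) ≤ η * K := le_of_lt (mul_pos hη hKpos)
    have hM1 : (384:ℝ) ≤ η * K * N := by
      have h := mul_le_mul hηK hN8 (by norm_num : (0:ℝ) ≤ 8) hηKnn
      nlinarith [h]
    have hM : (768:ℝ) ≤ η * K * N * L := by
      have h := mul_le_mul hM1 hL2 (by norm_num : (0:ℝ) ≤ 2) (by linarith : (0:ℝ) ≤ η * K * N)
      nlinarith [h]
    have hbig : 1 + 2 * η * X n ≤ 3 * η * K * N * L := by
      have : η * X n ≤ η * (K * N * L) := mul_le_mul_of_nonneg_left hXn (le_of_lt hη)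
      nlinarith [hM]
    have hlogmono : Real.log (1 + 2 * η * X n) ≤ Real.log (3 * η * K * N * L) :=
      Real.log_le_log hpos1 hbig
    have hA : Real.log (3 * η * K * N * L)
        = Real.log (3 * η * K) + Real.log N + Real.log L := by
      rw [show 3 * η * K * N * L = 3 * η * K * N * L from rfl,
        Real.log_mul (by positivity) (ne_of_gt hLpos),
        Real.log_mul (by positivity) (ne_of_gt hNpos)]
    have hlogL : Real.log L ≤ L := by
      linarith [Real.log_le_sub_one_of_pos hLpos]
    have hsplit : Real.log (1 + 2 * η * X n) ≤ Real.log (3 * η * K) + 2 * L := by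
      rw [hA] at hlogmono
      linarith [hLdef.ge, hLdef.le]
    have h1η : (0:ℝ) ≤ 1 / η := by positivity
    have hstep : (1 / η) * Real.log (1 + 2 * η * X n)
        ≤ (1 / η) * Real.log (3 * η * K) + (2 / η) * L := by
      have := mul_le_mul_of_nonneg_left hsplit h1η
      have heq : (1 / η) * (Real.log (3 * η * K) + 2 * L)
          = (1 / η) * Real.log (3 * η * K) + (2 / η) * L := by ring
      linarith
    have h2ηK : (2:ℝ) / η ≤ K / 2 := by
      rw [div_le_div_iff₀ hη two_pos]
      nlinarith [hηK]
    have hterm2 : (2 / η) * L ≤ (K / 2) * L :=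
      mul_le_mul_of_nonneg_right h2ηK (le_of_lt hLpos)
    have hterm1 : 2 + (1 / η) * Real.log (3 * η * K) ≤ (K / 2) * L := by
      have : K ≤ (K / 2) * L := by nlinarith [hKpos, hL2]
      linarith [hcore]
    have hfin : X (n + 1) ≤ K * N * L + K * L := by
      have := hrec n
      linarith [hstep, hterm1, hterm2, hXn]
    have hlast : K * N * L + K * L ≤ K * (N + 1) * Real.log (N + 1) := by
      have hmono' : L ≤ Real.log (N + 1) := by
        rw [hLdef]; exact Real.log_le_log hNpos (by linarith)
      have h1 : K * N * L + K * L = K * (N + 1) * L := by ring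
      have h2 : K * (N + 1) * L ≤ K * (N + 1) * Real.log (N + 1) :=
        mul_le_mul_of_nonneg_left hmono' (by positivity)
      linarith
    have hc : ((n + 1 : ℕ) : ℝ) = N + 1 := by rw [hNdef]; push_cast; ring
    rw [hc]
    exact le_trans hfin hlast
end

section
/- Logarithmic lower bound for an exponentially-damped growth recursion: let x : ℕ → ℝ with x₀ = 0, let c : ℕ → ℝ with c_n ≥ 0 for all n, and suppose x_{n+1} ≥ x_n + c_n·exp(−x_n) for all n. Then for every n ∈ ℕ, x_n ≥ log(1 + ∑_{t=0}^{n−1} c_t). -/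
/-- Logarithmic lower bound for an exponentially-damped growth recursion. -/
theorem damped_growth_log_lower_bound
    (x : ℕ → ℝ) (h0 : x 0 = 0) (c : ℕ → ℝ) (hc : ∀ n, 0 ≤ c n)
    (hrec : ∀ n : ℕ, x n + c n * Real.exp (-(x n)) ≤ x (n + 1)) :
    ∀ n : ℕ, Real.log (1 + ∑ t ∈ Finset.range n, c t) ≤ x n := by
  intro n
  induction n with
  | zero => simp [h0]
  | succ n ih =>
    have hS : (0:ℝ) ≤ ∑ t ∈ Finset.range n, c t :=
      Finset.sum_nonneg fun i _ => hc i
    have h1 : (1:ℝ) + ∑ t ∈ Finset.range n, c t ≤ Real.exp (x n) := by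
      calc (1:ℝ) + ∑ t ∈ Finset.range n, c t
          = Real.exp (Real.log (1 + ∑ t ∈ Finset.range n, c t)) := by
            rw [Real.exp_log]; linarith
        _ ≤ Real.exp (x n) := Real.exp_le_exp.2 ih
    have key : Real.exp (x n) + c n ≤ Real.exp (x (n+1)) := by
      calc Real.exp (x n) + c n
          = Real.exp (x n) * (1 + c n * Real.exp (-(x n))) := by
            rw [mul_add, mul_one, ← mul_assoc, mul_comm (Real.exp (x n)),
              mul_assoc, ← Real.exp_add]
            simp
        _ ≤ Real.exp (x n) * Real.exp (c n * Real.exp (-(x n))) := by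
            have := Real.add_one_le_exp (c n * Real.exp (-(x n)))
            have := Real.exp_pos (x n)
            nlinarith
        _ = Real.exp (x n + c n * Real.exp (-(x n))) := (Real.exp_add _ _).symm
        _ ≤ Real.exp (x (n+1)) := Real.exp_le_exp.2 (hrec n)
    have : (1:ℝ) + ∑ t ∈ Finset.range (n+1), c t ≤ Real.exp (x (n+1)) := by
      rw [Finset.sum_range_succ]; linarith
    calc Real.log (1 + ∑ t ∈ Finset.range (n+1), c t)
        ≤ Real.log (Real.exp (x (n+1))) := by
          apply Real.log_le_log (by rw [Finset.sum_range_succ]; have := hc n; linarith) this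
      _ = x (n+1) := Real.log_exp _
end

section
/- One-step probability-drop identity for the modified cross-entropy update: let A be a finite type with |A| ≥ 2, a* ∈ A, u ≥ 0, and let θ' be the MCE update of θ : A → ℝ with step u at a*. Then for every a ≠ a*, softmax θ (a) − softmax θ' (a) = softmax θ (a) · softmax θ' (a*) · (1 − exp(−u·|A|/(|A|−1))). -/
/-!
Softmax is invariant under adding a constant, and after adding `u / (|A| - 1)` the MCE update
only raises `θ a*`, by `u |A| / (|A| - 1)`. For a single raised coordinate the identity is a
direct computation with the two partition functions, which differ by `exp (θ a*) (exp t - 1)`.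
-/

open Finset Real

section Softmax

variable {A : Type*} [Fintype A]

theorem softmax_add_const (θ : A → ℝ) (c : ℝ) : softmax (fun b => θ b + c) = softmax θ := by
  funext a
  simp only [softmax, exp_add, ← sum_mul]
  exact mul_div_mul_right _ _ (exp_pos c).ne'

theorem sum_eq_sum_add_sub_of_eq_of_ne {f g : A → ℝ} {a : A} (h : ∀ b, b ≠ a → g b = f b) :
    ∑ b, g b = ∑ b, f b + (g a - f a) := by
  classical
  rw [← add_sum_erase _ g (mem_univ a), ← add_sum_erase _ f (mem_univ a),
    sum_congr rfl fun b hb => h b (ne_of_mem_erase hb)]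
  ring

theorem softmax_sub_softmax_of_raise {θ θ' : A → ℝ} {astar : A} {t : ℝ}
    (hstar : θ' astar = θ astar + t) (hother : ∀ b, b ≠ astar → θ' b = θ b)
    {a : A} (ha : a ≠ astar) :
    softmax θ a - softmax θ' a = softmax θ a * softmax θ' astar * (1 - exp (-t)) := by
  have hsum : ∑ b, exp (θ' b) = ∑ b, exp (θ b) + exp (θ astar) * (exp t - 1) := by
    rw [sum_eq_sum_add_sub_of_eq_of_ne (fun b hb => congrArg exp (hother b hb)), hstar, exp_add]
    ring
  have hS : 0 < ∑ b, exp (θ b) := sum_pos (fun b _ => exp_pos _) ⟨a, mem_univ a⟩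
  have hS' : 0 < ∑ b, exp (θ' b) := sum_pos (fun b _ => exp_pos _) ⟨a, mem_univ a⟩
  have het : exp (-t) * exp t = 1 := by rw [← exp_add, neg_add_cancel, exp_zero]
  simp only [softmax, hother a ha, hstar, exp_add]
  field_simp
  linear_combination hsum + exp (θ astar) * het

end Softmax

theorem mce_probability_drop_identity_general {A : Type*} [Fintype A]
    (hA : 2 ≤ Fintype.card A) (astar : A) (u : ℝ)
    (θ θ' : A → ℝ)
    (hstar : θ' astar = θ astar + u)
    (hother : ∀ a, a ≠ astar → θ' a = θ a - u / ((Fintype.card A : ℝ) - 1)) :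
    ∀ a, a ≠ astar →
      softmax θ a - softmax θ' a =
        softmax θ a * softmax θ' astar *
          (1 - Real.exp (-(u * (Fintype.card A : ℝ) / ((Fintype.card A : ℝ) - 1)))) := by
  intro a ha
  set n : ℝ := (Fintype.card A : ℝ)
  set c := u / (n - 1)
  have hn : n - 1 ≠ 0 := by
    have : (2 : ℝ) ≤ n := Nat.ofNat_le_cast.mpr hA
    linarith
  have ht : u * n / (n - 1) = u + c := by unfold c; field_simp; ring
  rw [ht, ← softmax_add_const θ' c]
  refine softmax_sub_softmax_of_raise ?_ (fun b hb => ?_) ha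
  · rw [hstar]; ring
  · rw [hother b hb]; ring

/-- One-step probability-drop identity for the modified cross-entropy update. -/
theorem mce_probability_drop_identity {A : Type*} [Fintype A] [DecidableEq A]
    (hA : 2 ≤ Fintype.card A) (astar : A) (u : ℝ) (hu : 0 ≤ u)
    (θ θ' : A → ℝ)
    (hstar : θ' astar = θ astar + u)
    (hother : ∀ a, a ≠ astar → θ' a = θ a - u / ((Fintype.card A : ℝ) - 1)) :
    ∀ a, a ≠ astar →
      softmax θ a - softmax θ' a =
        softmax θ a * softmax θ' astar *
          (1 - Real.exp (-(u * (Fintype.card A : ℝ) / ((Fintype.card A : ℝ) - 1)))) :=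
  mce_probability_drop_identity_general hA astar u θ θ' hstar hother
end

section
/- Convergence rate of iterated modified cross-entropy updates: let A be a finite type with |A| ≥ 2, let c = |A|/(|A|−1), fix a* ∈ A, and let θ₀ : A → ℝ satisfy softmax θ₀ (a*) ≥ 1/2. Let w : ℕ → ℝ with w_t ≥ 0 for all t, and define θ_{t+1} as the MCE update of θ_t with step u_t = w_t·(1 − softmax θ_t (a*)) at a*. Then for every t ∈ ℕ, 1 − softmax θ_t (a*) ≤ 1 / (2 + (c/2)·∑_{t'=0}^{t−1} w_{t'}). -/
/-!
With `δ = 1 - softmax θ a*` and `ρ = softmax θ a* / δ` the odds of `a*` against the other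
actions, `δ⁻¹ = 1 + ρ`. An MCE step of size `u` multiplies `ρ` by `exp (c u)`, so with
`exp (c u) ≥ 1 + c u` and `u = w δ` it raises `δ⁻¹` by at least `c w ρ δ = c w softmax θ a*`.
While `δ⁻¹ ≥ 2`, i.e. `softmax θ a* ≥ 1/2`, this gain is at least `c w / 2`, and the bound on
`δ_t⁻¹` follows by induction.
-/

open Finset Real

noncomputable section

variable {A : Type*} [Fintype A] [DecidableEq A]

def softmaxOdds (θ : A → ℝ) (a : A) : ℝ :=
  exp (θ a) / ∑ b ∈ univ.erase a, exp (θ b)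

def mceUpdate (θ : A → ℝ) (a : A) (u : ℝ) : A → ℝ :=
  fun b => if b = a then θ a + u else θ b - u / ((Fintype.card A : ℝ) - 1)

lemma sum_exp_erase_pos [Nontrivial A] (θ : A → ℝ) (a : A) :
    0 < ∑ b ∈ univ.erase a, exp (θ b) := by
  obtain ⟨b, hb⟩ := exists_ne a
  exact sum_pos (fun _ _ => exp_pos _) ⟨b, mem_erase.2 ⟨hb, mem_univ b⟩⟩

lemma one_sub_softmax_eq (θ : A → ℝ) (a : A) :
    1 - softmax θ a = (∑ b ∈ univ.erase a, exp (θ b)) / ∑ b, exp (θ b) := by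
  have hsum := add_sum_erase univ (fun b => exp (θ b)) (mem_univ a)
  have hpos : 0 < ∑ b, exp (θ b) := sum_pos (fun _ _ => exp_pos _) ⟨a, mem_univ a⟩
  rw [softmax, eq_div_iff hpos.ne', sub_mul, div_mul_cancel₀ _ hpos.ne', ← hsum]
  ring

lemma inv_one_sub_softmax [Nontrivial A] (θ : A → ℝ) (a : A) :
    (1 - softmax θ a)⁻¹ = 1 + softmaxOdds θ a := by
  have hR := (sum_exp_erase_pos θ a).ne'
  rw [one_sub_softmax_eq, inv_div, softmaxOdds, ← add_sum_erase univ _ (mem_univ a)]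
  field_simp
  ring

lemma one_sub_softmax_pos [Nontrivial A] (θ : A → ℝ) (a : A) : 0 < 1 - softmax θ a := by
  rw [one_sub_softmax_eq]
  exact div_pos (sum_exp_erase_pos θ a) (sum_pos (fun _ _ => exp_pos _) univ_nonempty)

lemma two_le_inv_one_sub_softmax_iff [Nontrivial A] (θ : A → ℝ) (a : A) :
    2 ≤ (1 - softmax θ a)⁻¹ ↔ 1 / 2 ≤ softmax θ a := by
  rw [le_inv_comm₀ two_pos (one_sub_softmax_pos θ a)]
  constructor <;> intro h <;> linarith

lemma softmaxOdds_mul_one_sub_softmax [Nontrivial A] (θ : A → ℝ) (a : A) :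
    softmaxOdds θ a * (1 - softmax θ a) = softmax θ a := by
  rw [softmaxOdds, one_sub_softmax_eq, softmax,
    div_mul_div_cancel₀ (sum_exp_erase_pos θ a).ne']

lemma softmaxOdds_mceUpdate [Nontrivial A] (θ : A → ℝ) (a : A) (u : ℝ) :
    softmaxOdds (mceUpdate θ a u) a =
      softmaxOdds θ a * exp ((Fintype.card A : ℝ) / ((Fintype.card A : ℝ) - 1) * u) := by
  have hcard : (1 : ℝ) < Fintype.card A := by exact_mod_cast Fintype.one_lt_card
  have hother : ∑ b ∈ univ.erase a, exp (mceUpdate θ a u b) =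
      (∑ b ∈ univ.erase a, exp (θ b)) * exp (-(u / ((Fintype.card A : ℝ) - 1))) := by
    rw [sum_mul]
    refine sum_congr rfl fun b hb => ?_
    rw [mceUpdate, if_neg (ne_of_mem_erase hb), ← exp_add, sub_eq_add_neg]
  have hexp : (Fintype.card A : ℝ) / ((Fintype.card A : ℝ) - 1) * u =
      u - -(u / ((Fintype.card A : ℝ) - 1)) := by
    field_simp [(sub_pos.2 hcard).ne']
    ring
  rw [softmaxOdds, softmaxOdds, hother, mceUpdate, if_pos rfl, hexp, exp_sub, exp_add]
  field_simp

lemma inv_one_sub_softmax_add_le_mceUpdate [Nontrivial A] (θ : A → ℝ) (a : A) (w : ℝ) :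
    (1 - softmax θ a)⁻¹ + (Fintype.card A : ℝ) / ((Fintype.card A : ℝ) - 1) * w * softmax θ a ≤
      (1 - softmax (mceUpdate θ a (w * (1 - softmax θ a))) a)⁻¹ := by
  set c := (Fintype.card A : ℝ) / ((Fintype.card A : ℝ) - 1)
  set u := w * (1 - softmax θ a)
  have hρ : 0 ≤ softmaxOdds θ a := div_nonneg (exp_pos _).le (sum_exp_erase_pos θ a).le
  calc (1 - softmax θ a)⁻¹ + c * w * softmax θ a
      = 1 + softmaxOdds θ a * (1 + c * u) := by
        rw [inv_one_sub_softmax, ← softmaxOdds_mul_one_sub_softmax]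
        ring
    _ ≤ 1 + softmaxOdds θ a * exp (c * u) := by
        gcongr
        linarith [add_one_le_exp (c * u)]
    _ = (1 - softmax (mceUpdate θ a u) a)⁻¹ := by
        rw [inv_one_sub_softmax, softmaxOdds_mceUpdate]

end

/-- Convergence rate of iterated modified cross-entropy updates. -/
theorem mce_iterated_convergence_rate {A : Type*} [Fintype A] [DecidableEq A]
    (hA : 2 ≤ Fintype.card A) (astar : A)
    (θ : ℕ → A → ℝ) (hinit : 1 / 2 ≤ softmax (θ 0) astar)
    (w : ℕ → ℝ) (hw : ∀ t, 0 ≤ w t)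
    (hstar : ∀ t : ℕ, θ (t + 1) astar =
      θ t astar + w t * (1 - softmax (θ t) astar))
    (hother : ∀ t : ℕ, ∀ a, a ≠ astar → θ (t + 1) a =
      θ t a - w t * (1 - softmax (θ t) astar) / ((Fintype.card A : ℝ) - 1)) :
    ∀ t : ℕ, 1 - softmax (θ t) astar ≤
      1 / (2 + ((Fintype.card A : ℝ) / ((Fintype.card A : ℝ) - 1) / 2) *
        ∑ t' ∈ Finset.range t, w t') := by
  have : Nontrivial A := Fintype.one_lt_card_iff_nontrivial.1 hA
  set c := (Fintype.card A : ℝ) / ((Fintype.card A : ℝ) - 1)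
  have hc : 0 ≤ c := div_nonneg (by positivity) (by linarith [(Nat.ofNat_le_cast (α := ℝ)).2 hA])
  have hθ : ∀ t, θ (t + 1) = mceUpdate (θ t) astar (w t * (1 - softmax (θ t) astar)) := by
    intro t; funext b
    by_cases hb : b = astar
    · subst hb; simp [mceUpdate, hstar]
    · simp [mceUpdate, hb, hother t b hb]
  have hgrowth : ∀ t, 0 ≤ c / 2 * ∑ t' ∈ range t, w t' := fun t =>
    mul_nonneg (div_nonneg hc zero_le_two) (sum_nonneg fun i _ => hw i)
  have hmain : ∀ t, 2 + c / 2 * ∑ t' ∈ range t, w t' ≤ (1 - softmax (θ t) astar)⁻¹ := by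
    intro t
    induction t with
    | zero => simpa using (two_le_inv_one_sub_softmax_iff (θ 0) astar).2 hinit
    | succ t ih =>
      have hhalf : 1 / 2 ≤ softmax (θ t) astar :=
        (two_le_inv_one_sub_softmax_iff _ _).1 <| ih.trans' (le_add_of_nonneg_right (hgrowth t))
      have hgain : c / 2 * w t ≤ c * w t * softmax (θ t) astar := by
        nlinarith [mul_nonneg hc (hw t)]
      rw [sum_range_succ, hθ]
      linarith [inv_one_sub_softmax_add_le_mceUpdate (θ t) astar (w t)]
  intro t
  rw [one_div, ← inv_inv (1 - softmax (θ t) astar)]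
  exact inv_anti₀ (add_pos_of_pos_of_nonneg two_pos (hgrowth t)) (hmain t)
end
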